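/- arXiv:1907.03349 — 4 statements merged into one kernel-verified Lean document; each statement's English description precedes it below -/
import Mathlib

section
/- There exists a straight hairy Cantor set in the plane ℝ². -/
open Set Filter Topology Metric

/-- A Cantor set in ℝ: nonempty, compact, perfect, totally disconnected. -/
def IsCantorSet (C : Set ℝ) : Prop :=
  C.Nonempty ∧ IsCompact C ∧ Perfect C ∧ IsTotallyDisconnected C

/-- `x` is an end point of the Cantor set `C`. -/
def IsEndpointOf (C : Set ℝ) (x : ℝ) : Prop :=
  ∃ δ > (0:ℝ), Ioo x (x + δ) ∩ C = ∅ ∨ Ioo (x - δ) x ∩ C = ∅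

/-- `X` is the straight hairy Cantor set determined by the base Cantor set `C` and the
length function `l`. -/
def IsStraightHairyCantorSetWith (C : Set ℝ) (l : ℝ → ℝ) (X : Set (ℝ × ℝ)) : Prop :=
  IsCantorSet C ∧ (∀ x ∈ C, 0 ≤ l x) ∧
  X = {p : ℝ × ℝ | p.1 ∈ C ∧ 0 ≤ p.2 ∧ p.2 ≤ l p.1} ∧
  -- (i) the set of points with positive length is dense in C
  C ⊆ closure {x | x ∈ C ∧ 0 < l x} ∧
  -- (ii) at end points, l vanishes together with its limsup
  (∀ x ∈ C, IsEndpointOf C x →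
    l x = 0 ∧ Filter.limsup l (𝓝[C \ {x}] x) = 0) ∧
  -- (iii) at non end points, one-sided limsups equal l x
  (∀ x ∈ C, ¬ IsEndpointOf C x →
    Filter.limsup l (𝓝[C ∩ Iio x] x) = l x ∧ Filter.limsup l (𝓝[C ∩ Ioi x] x) = l x)

/-- `X ⊆ ℝ²` is a straight hairy Cantor set. -/
def IsStraightHairyCantorSet (X : Set (ℝ × ℝ)) : Prop :=
  ∃ C l, IsStraightHairyCantorSetWith C l X

noncomputable section SHCS

open scoped ENNReal
attribute [local instance] Classical.propDecidable

namespace SHCS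

/-- the `n`-th term of the ternary expansion -/
def trm (b : Bool) (n : ℕ) : ℝ := (if b then 2 else 0) * (1/3)^(n+1)

lemma trm_nonneg (b n) : 0 ≤ trm b n := by
  unfold trm; positivity

lemma trm_le (b n) : trm b n ≤ 2 * (1/3)^(n+1) := by
  unfold trm
  have : (0:ℝ) ≤ (1/3)^(n+1) := by positivity
  cases b <;> simp <;> nlinarith

lemma abs_trm_sub_le (b c : Bool) (n : ℕ) : |trm b n - trm c n| ≤ 2 * (1/3)^(n+1) := by
  have h1 := trm_nonneg b n
  have h2 := trm_nonneg c n
  have h3 := trm_le b n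
  have h4 := trm_le c n
  rw [abs_le]; constructor <;> nlinarith

lemma summable_bound : Summable (fun n : ℕ => 2 * (1/3:ℝ)^(n+1)) := by
  have : (fun n : ℕ => 2 * (1/3:ℝ)^(n+1)) = fun n => (2/3) * (1/3)^n := by
    funext n; rw [pow_succ]; ring
  rw [this]
  exact (summable_geometric_of_lt_one (by norm_num) (by norm_num)).mul_left _

lemma tsum_bound : ∑' n : ℕ, 2 * (1/3:ℝ)^(n+1) = 1 := by
  have : (fun n : ℕ => 2 * (1/3:ℝ)^(n+1)) = fun n => (2/3) * (1/3)^n := by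
    funext n; rw [pow_succ]; ring
  rw [this, tsum_mul_left, tsum_geometric_of_lt_one (by norm_num) (by norm_num)]
  norm_num

lemma summable_trm (a : ℕ → Bool) : Summable (fun n => trm (a n) n) :=
  Summable.of_nonneg_of_le (fun n => trm_nonneg _ n) (fun n => trm_le _ n) summable_bound

/-- the embedding of the binary sequence space into ℝ -/
def gmap (a : ℕ → Bool) : ℝ := ∑' n, trm (a n) n

/-- the tail bound: sum of `if n < m then 0 else 2*(1/3)^(n+1)` -/
lemma tsum_tailbound (m : ℕ) :
    ∑' n : ℕ, (if n < m then 0 else 2 * (1/3:ℝ)^(n+1)) = (1/3)^m := by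
  have hs : Summable (fun n : ℕ => (if n < m then 0 else 2 * (1/3:ℝ)^(n+1))) := by
    apply Summable.of_nonneg_of_le (fun n => ?_) (fun n => ?_) summable_bound
    · split <;> positivity
    · split
      · positivity
      · exact le_rfl
  rw [← Summable.sum_add_tsum_nat_add m hs]
  have h1 : (∑ i ∈ Finset.range m, (if i < m then 0 else 2 * (1/3:ℝ)^(i+1))) = 0 := by
    apply Finset.sum_eq_zero
    intro i hi
    simp [Finset.mem_range.mp hi]
  have h2 : (fun i : ℕ => (if i + m < m then 0 else 2 * (1/3:ℝ)^((i+m)+1)))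
      = fun i => ((1/3:ℝ)^m) * (2 * (1/3)^(i+1)) := by
    funext i
    have : ¬ (i + m < m) := by omega
    simp only [this, if_false]
    rw [show (i+m)+1 = (i+1)+m by omega, pow_add]
    ring
  rw [h1, h2, tsum_mul_left, tsum_bound, zero_add, mul_one]


lemma tsum_abs_le' {f g : ℕ → ℝ} (hf : Summable f) (hg : Summable g)
    (h : ∀ n, |f n| ≤ g n) : |∑' n, f n| ≤ ∑' n, g n := by
  rw [abs_le]
  constructor
  · have h2 := Summable.tsum_le_tsum (f := fun n => -(g n)) (g := f)
      (fun n => neg_le_of_abs_le (h n)) hg.neg hf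
    rw [tsum_neg] at h2
    linarith
  · exact Summable.tsum_le_tsum (fun n => (abs_le.mp (h n)).2) hf hg

lemma summable_tailbound (m : ℕ) :
    Summable (fun n : ℕ => (if n < m then 0 else 2 * (1/3:ℝ)^(n+1))) := by
  apply Summable.of_nonneg_of_le (fun n => ?_) (fun n => ?_) summable_bound
  · split <;> positivity
  · split
    · positivity
    · exact le_rfl

lemma gmap_sub (a b : ℕ → Bool) :
    gmap a - gmap b = ∑' n, (trm (a n) n - trm (b n) n) :=
  (Summable.tsum_sub (summable_trm a) (summable_trm b)).symm

/-- L1 : agreement below `m` gives closeness -/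
lemma gmap_abs_sub_le {a b : ℕ → Bool} {m : ℕ} (h : ∀ n, n < m → a n = b n) :
    |gmap a - gmap b| ≤ (1/3)^m := by
  rw [gmap_sub]
  have hsum : Summable (fun n => trm (a n) n - trm (b n) n) :=
    (summable_trm a).sub (summable_trm b)
  rw [← tsum_tailbound m]
  apply tsum_abs_le' hsum (summable_tailbound m)
  intro n
  by_cases hn : n < m
  · simp [hn, h n hn]
  · simpa [hn] using abs_trm_sub_le (a n) (b n) n

/-- L2 : first difference at `m` with `a m = false < b m = true` -/
lemma gmap_sub_bounds {a b : ℕ → Bool} {m : ℕ} (h : ∀ n, n < m → a n = b n)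
    (ha : a m = false) (hb : b m = true) :
    (1/3)^(m+1) ≤ gmap b - gmap a ∧ gmap b - gmap a ≤ (1/3)^m := by
  have hsum : Summable (fun n => trm (b n) n - trm (a n) n) :=
    (summable_trm b).sub (summable_trm a)
  have hdm : trm (b m) m - trm (a m) m = 2 * (1/3)^(m+1) := by
    rw [ha, hb]; unfold trm; simp
  have key : gmap b - gmap a
      = 2 * (1/3)^(m+1) + ∑' n, (if n = m then 0 else trm (b n) n - trm (a n) n) := by
    rw [gmap_sub, Summable.tsum_eq_add_tsum_ite hsum m, hdm]
  have hsum2 : Summable (fun n : ℕ => (if n = m then 0 else trm (b n) n - trm (a n) n)) := by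
    have habs : Summable (fun n : ℕ => |if n = m then 0 else trm (b n) n - trm (a n) n|) := by
      apply Summable.of_nonneg_of_le (fun n => abs_nonneg _) (fun n => ?_) summable_bound
      by_cases hn : n = m
      · rw [hn, if_pos rfl, abs_zero]
        positivity
      · simpa [hn] using abs_trm_sub_le (b n) (a n) n
    exact habs.of_abs
  have habs : |∑' n, (if n = m then 0 else trm (b n) n - trm (a n) n)| ≤ (1/3)^(m+1) := by
    rw [← tsum_tailbound (m+1)]
    apply tsum_abs_le' hsum2 (summable_tailbound (m+1))
    intro n
    rcases lt_trichotomy n m with hn | hn | hn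
    · have : n < m + 1 := by omega
      simp [hn.ne, this, h n hn]
    · simp [hn]
    · have h1 : ¬ (n = m) := by omega
      have h2 : ¬ (n < m + 1) := by omega
      simpa [h1, h2] using abs_trm_sub_le (b n) (a n) n
  rw [abs_le] at habs
  constructor
  · rw [key]
    linarith [habs.1]
  · rw [key]
    have : (1/3:ℝ)^m = 3 * (1/3)^(m+1) := by rw [pow_succ]; ring
    linarith [habs.2]


lemma gmap_lt_of_diff {a b : ℕ → Bool} {m : ℕ} (h : ∀ n, n < m → a n = b n)
    (ha : a m = false) (hb : b m = true) : gmap a < gmap b := by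
  have := (gmap_sub_bounds h ha hb).1
  have hp : (0:ℝ) < (1/3)^(m+1) := by positivity
  linarith

lemma abs_gmap_ge_of_diff {a b : ℕ → Bool} {j : ℕ} (h : ∀ n, n < j → a n = b n)
    (hj : a j ≠ b j) : (1/3)^(j+1) ≤ |gmap a - gmap b| := by
  cases hja : a j <;> cases hjb : b j
  · rw [hja, hjb] at hj; exact absurd rfl hj
  · have := (gmap_sub_bounds h hja hjb).1
    rw [abs_sub_comm]
    calc (1/3:ℝ)^(j+1) ≤ gmap b - gmap a := this
      _ ≤ |gmap b - gmap a| := le_abs_self _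
  · have := (gmap_sub_bounds (fun n hn => (h n hn).symm) hjb hja).1
    calc (1/3:ℝ)^(j+1) ≤ gmap a - gmap b := this
      _ ≤ |gmap a - gmap b| := le_abs_self _
  · rw [hja, hjb] at hj; exact absurd rfl hj

lemma agree_of_close {a b : ℕ → Bool} {m : ℕ}
    (h : |gmap a - gmap b| < (1/3)^(m+1)) : ∀ n, n ≤ m → a n = b n := by
  by_contra hc
  push_neg at hc
  obtain ⟨n0, hn0, hne⟩ := hc
  have hex : ∃ j, a j ≠ b j := ⟨n0, hne⟩
  classical
  let j := Nat.find hex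
  have hj : a j ≠ b j := Nat.find_spec hex
  have hjle : j ≤ m := le_trans (Nat.find_le hne) hn0
  have hagree : ∀ n, n < j → a n = b n := by
    intro n hn
    by_contra hne2
    exact absurd (Nat.find_le hne2) (not_le.mpr hn)
  have := abs_gmap_ge_of_diff hagree hj
  have hmono : (1/3:ℝ)^(m+1) ≤ (1/3)^(j+1) := by
    apply pow_le_pow_of_le_one (by norm_num) (by norm_num)
    omega
  linarith

lemma gmap_injective : Function.Injective gmap := by
  intro a b hab
  by_contra hne
  have hex : ∃ j, a j ≠ b j := by
    by_contra hc
    push_neg at hc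
    exact hne (funext hc)
  classical
  let j := Nat.find hex
  have hj : a j ≠ b j := Nat.find_spec hex
  have hagree : ∀ n, n < j → a n = b n := by
    intro n hn
    by_contra hne2
    exact absurd (Nat.find_le hne2) (not_le.mpr hn)
  have h1 := abs_gmap_ge_of_diff hagree hj
  rw [hab, sub_self, abs_zero] at h1
  have h0 : (0:ℝ) < (1/3)^(j+1) := by positivity
  linarith

lemma continuous_gmap : Continuous gmap := by
  apply continuous_tsum (u := fun n => 2*(1/3:ℝ)^(n+1))
  · intro n
    exact Continuous.comp
      (continuous_of_discreteTopology (α := Bool) (β := ℝ) (f := fun b => trm b n))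
      (continuous_apply n)
  · exact summable_bound
  · intro n x
    rw [Real.norm_eq_abs, abs_of_nonneg (trm_nonneg _ _)]
    exact trm_le _ _

/-- The Cantor set -/
def Cset : Set ℝ := Set.range gmap

lemma isCompact_Cset : IsCompact Cset :=
  isCompact_range continuous_gmap

/-- the approach sequences : copy `a` up to `p`, then alternate starting with `v` -/
def appr (a : ℕ → Bool) (p : ℕ) (v : Bool) : ℕ → Bool :=
  fun n => if n ≤ p then a n else if (n - p) % 2 = 1 then v else !v

lemma appr_agree (a p v) : ∀ n, n ≤ p → appr a p v n = a n := by
  intro n hn; simp [appr, hn]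

lemma appr_succ (a p v) : appr a p v (p+1) = v := by
  simp [appr]

lemma appr_alt (a p v) : ∀ n, p < n → appr a p v (n+1) ≠ appr a p v n := by
  intro n hn
  have h1 : ¬ (n + 1 ≤ p) := by omega
  have h2 : ¬ (n ≤ p) := by omega
  simp only [appr, if_neg h1, if_neg h2]
  rcases Nat.even_or_odd (n - p) with he | ho
  · have e1 : (n - p) % 2 = 0 := Nat.even_iff.mp he
    have e2 : (n + 1 - p) % 2 = 1 := by omega
    simp [e1, e2]
  · have e1 : (n - p) % 2 = 1 := Nat.odd_iff.mp ho
    have e2 : (n + 1 - p) % 2 = 0 := by omega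
    simp [e1, e2]

lemma appr_ne (a p v) (hv : a (p+1) ≠ v) : appr a p v ≠ a := by
  intro hEq
  have := appr_succ a p v
  rw [hEq] at this
  exact hv this

lemma appr_close (a p v) : |gmap (appr a p v) - gmap a| ≤ (1/3)^(p+1) := by
  apply gmap_abs_sub_le
  intro n hn
  exact appr_agree a p v n (by omega)

lemma appr_gt (a p) (hv : a (p+1) = false) :
    gmap a < gmap (appr a p true) := by
  apply gmap_lt_of_diff (m := p+1) (fun n hn => (appr_agree a p true n (by omega)).symm) hv
  exact appr_succ a p true

lemma appr_lt (a p) (hv : a (p+1) = true) :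
    gmap (appr a p false) < gmap a := by
  apply gmap_lt_of_diff (m := p+1) (fun n hn => appr_agree a p false n (by omega)) _ hv
  exact appr_succ a p false

lemma perfect_Cset : Perfect Cset := by
  constructor
  · exact isCompact_Cset.isClosed
  · rintro x ⟨a, rfl⟩
    rw [accPt_iff_nhds]
    intro U hU
    obtain ⟨ε, hε, hball⟩ := Metric.mem_nhds_iff.mp hU
    obtain ⟨p, hp⟩ := exists_pow_lt_of_lt_one hε (show (1/3:ℝ) < 1 by norm_num)
    set b := appr a (p+1) (!(a (p+2))) with hb
    refine ⟨gmap b, ⟨?_, ⟨b, rfl⟩⟩, ?_⟩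
    · apply hball
      rw [Metric.mem_ball, Real.dist_eq]
      calc |gmap b - gmap a| ≤ (1/3)^(p+2) := appr_close a (p+1) _
        _ ≤ (1/3)^p := by
            apply pow_le_pow_of_le_one (by norm_num) (by norm_num)
            omega
        _ < ε := hp
    · intro hEq
      have hbne : b ≠ a := appr_ne a (p+1) _ (by cases a (p+2) <;> simp)
      exact hbne (gmap_injective hEq)


lemma gmap_mono {a b : ℕ → Bool} (h : ∀ n, a n = true → b n = true) :
    gmap a ≤ gmap b := by
  have hterm : ∀ n, trm (a n) n ≤ trm (b n) n := by
    intro n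
    cases han : a n
    · unfold trm
      have hbn := trm_nonneg (b n) n
      have : (0:ℝ) ≤ (1/3)^(n+1) := by positivity
      cases b n <;> simp <;> linarith
    · rw [h n han]
  have := Summable.tsum_le_tsum hterm (summable_trm a) (summable_trm b)
  exact this

lemma exists_gap {u v : ℝ} (hu : u ∈ Cset) (hv : v ∈ Cset) (huv : u < v) :
    ∃ y, u < y ∧ y < v ∧ y ∉ Cset := by
  classical
  obtain ⟨a, rfl⟩ := hu
  obtain ⟨b, rfl⟩ := hv
  have hne : a ≠ b := fun h => absurd (congrArg gmap h) (ne_of_lt huv)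
  have hex : ∃ j, a j ≠ b j := by
    by_contra hc; push_neg at hc; exact hne (funext hc)
  let j := Nat.find hex
  have hj : a j ≠ b j := Nat.find_spec hex
  have hagree : ∀ n, n < j → a n = b n := fun n hn => by
    by_contra hne2; exact absurd (Nat.find_le hne2) (not_le.mpr hn)
  have haj : a j = false ∧ b j = true := by
    cases hja : a j <;> cases hjb : b j
    · rw [hja, hjb] at hj; exact absurd rfl hj
    · exact ⟨rfl, rfl⟩
    · exfalso
      have := gmap_lt_of_diff (fun n hn => (hagree n hn).symm) hjb hja
      linarith
    · rw [hja, hjb] at hj; exact absurd rfl hj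
  set bA : ℕ → Bool := fun n => if n ≤ j then a n else true with hbA
  set bB : ℕ → Bool := fun n => if n ≤ j then b n else false with hbB
  have hA_agree : ∀ n, n < j → bA n = a n := fun n hn => by simp [hbA, Nat.le_of_lt hn]
  have hB_agree : ∀ n, n < j → bB n = a n := fun n hn => by
    simp [hbB, Nat.le_of_lt hn, hagree n hn]
  have hAj : bA j = false := by simp [hbA, haj.1]
  have hBj : bB j = true := by simp [hbB, haj.2]
  have hAB := gmap_sub_bounds (a := bA) (b := bB)
    (fun n hn => (hA_agree n hn).trans (hB_agree n hn).symm) hAj hBj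
  set y : ℝ := gmap bA + (1/2) * (1/3)^(j+1) with hy
  have hpos : (0:ℝ) < (1/3)^(j+1) := by positivity
  have hAy : gmap bA < y := by rw [hy]; linarith
  have hyB : y < gmap bB := by rw [hy]; linarith [hAB.1]
  have huA : gmap a ≤ gmap bA := by
    apply gmap_mono
    intro n han
    by_cases hn : n ≤ j
    · simp [hbA, hn, han]
    · simp [hbA, hn]
  have hBv : gmap bB ≤ gmap b := by
    apply gmap_mono
    intro n hbn
    by_cases hn : n ≤ j
    · simp only [hbB, if_pos hn] at hbn; exact hbn
    · simp only [hbB, if_neg hn] at hbn; exact absurd hbn (by simp)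
  refine ⟨y, by linarith, by linarith, ?_⟩
  rintro ⟨c, hc⟩
  by_cases hpre : ∀ n, n < j → c n = a n
  · cases hcj : c j
    · have : gmap c ≤ gmap bA := by
        apply gmap_mono
        intro n hcn
        by_cases hn : n ≤ j
        · rcases Nat.lt_or_ge n j with h1 | h1
          · simp [hbA, hn, ← hpre n h1, hcn]
          · have : n = j := by omega
            rw [this] at hcn; rw [hcj] at hcn; exact absurd hcn (by simp)
        · simp [hbA, hn]
      rw [hc] at this; linarith
    · have : gmap bB ≤ gmap c := by
        apply gmap_mono
        intro n hbn
        by_cases hn : n ≤ j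
        · rcases Nat.lt_or_ge n j with h1 | h1
          · rw [hpre n h1, hagree n h1]
            simpa [hbB, hn] using hbn
          · have hnj : n = j := by omega
            rw [hnj, hcj]
        · simp only [hbB, if_neg hn] at hbn; exact absurd hbn (by simp)
      rw [hc] at this; linarith
  · push_neg at hpre
    obtain ⟨n0, hn0j, hn0⟩ := hpre
    have hex2 : ∃ i, c i ≠ a i := ⟨n0, hn0⟩
    let i := Nat.find hex2
    have hi : c i ≠ a i := Nat.find_spec hex2
    have hij : i < j := lt_of_le_of_lt (Nat.find_le hn0) hn0j
    have hiagree : ∀ n, n < i → c n = a n := fun n hn => by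
      by_contra hne2; exact absurd (Nat.find_le hne2) (not_le.mpr hn)
    have hstep : (1/3:ℝ)^j ≥ 3 * (1/3)^(j+1) := by rw [pow_succ]; linarith [hpos]
    have hmono2 : (1/3:ℝ)^(i+1) ≥ (1/3)^j := by
      apply pow_le_pow_of_le_one (by norm_num) (by norm_num); omega
    cases hci : c i
    · have hai : a i = true := by
        cases hai : a i
        · rw [hci, hai] at hi; exact absurd rfl hi
        · rfl
      have hAi : bA i = true := by simp [hbA, Nat.le_of_lt hij, hai]
      have hagr : ∀ n, n < i → c n = bA n := fun n hn =>
        (hiagree n hn).trans (hA_agree n (by omega)).symm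
      have := (gmap_sub_bounds hagr hci hAi).1
      rw [hc] at this
      -- gmap bA - y ≥ (1/3)^(i+1)  but y > gmap bA
      linarith
    · have hai : a i = false := by
        cases hai : a i
        · rfl
        · rw [hci, hai] at hi; exact absurd rfl hi
      have hBi : bB i = false := by
        simp [hbB, Nat.le_of_lt hij, ← hagree i hij, hai]
      have hagr : ∀ n, n < i → bB n = c n := fun n hn =>
        (hB_agree n (by omega)).trans (hiagree n hn).symm
      have := (gmap_sub_bounds hagr hBi hci).1
      rw [hc] at this
      -- y - gmap bB ≥ (1/3)^(i+1) but y < gmap bB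
      linarith

lemma isTotallyDisconnected_Cset : IsTotallyDisconnected Cset := by
  intro t htC htconn
  intro u hu v hv
  by_contra hne
  rcases lt_or_gt_of_ne hne with h | h
  · obtain ⟨y, h1, h2, h3⟩ := exists_gap (htC hu) (htC hv) h
    exact h3 (htC (htconn.Icc_subset hu hv ⟨le_of_lt h1, le_of_lt h2⟩))
  · obtain ⟨y, h1, h2, h3⟩ := exists_gap (htC hv) (htC hu) h
    exact h3 (htC (htconn.Icc_subset hv hu ⟨le_of_lt h1, le_of_lt h2⟩))


/-- eventually constant equal to `v` -/
def evC (a : ℕ → Bool) (v : Bool) : Prop := ∃ K, ∀ n, K ≤ n → a n = v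

lemma endpoint_of_ev {a : ℕ → Bool} {v : Bool} (h : evC a v) :
    IsEndpointOf Cset (gmap a) := by
  obtain ⟨K, hK⟩ := h
  refine ⟨(1/3)^K, by positivity, ?_⟩
  cases hv : v
  · -- eventually false : left gap
    right
    ext z
    simp only [Set.mem_inter_iff, Set.mem_empty_iff_false, iff_false, not_and]
    rintro hz ⟨d, rfl⟩
    rw [Set.mem_Ioo] at hz
    have hne : d ≠ a := by
      intro hEq; rw [hEq] at hz; linarith [hz.2]
    have hex : ∃ j, d j ≠ a j := by
      by_contra hc; push_neg at hc; exact hne (funext hc)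
    classical
    let j := Nat.find hex
    have hj : d j ≠ a j := Nat.find_spec hex
    have hagree : ∀ n, n < j → d n = a n := fun n hn => by
      by_contra hne2; exact absurd (Nat.find_le hne2) (not_le.mpr hn)
    have hdj : d j = false ∧ a j = true := by
      cases hjd : d j <;> cases hja : a j
      · rw [hjd, hja] at hj; exact absurd rfl hj
      · exact ⟨rfl, rfl⟩
      · exfalso
        have := gmap_lt_of_diff (fun n hn => (hagree n hn).symm) hja hjd
        linarith [hz.2]
      · rw [hjd, hja] at hj; exact absurd rfl hj
    have hjK : j < K := by
      by_contra hc
      push_neg at hc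
      have h9 := hK j hc
      rw [hdj.2, hv] at h9
      exact absurd h9 (by simp)
    have := (gmap_sub_bounds hagree hdj.1 hdj.2).1
    have hmono : (1/3:ℝ)^K ≤ (1/3)^(j+1) := by
      apply pow_le_pow_of_le_one (by norm_num) (by norm_num); omega
    linarith [hz.1]
  · -- eventually true : right gap
    left
    ext z
    simp only [Set.mem_inter_iff, Set.mem_empty_iff_false, iff_false, not_and]
    rintro hz ⟨d, rfl⟩
    rw [Set.mem_Ioo] at hz
    have hne : a ≠ d := by
      intro hEq; rw [← hEq] at hz; linarith [hz.1]
    have hex : ∃ j, a j ≠ d j := by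
      by_contra hc; push_neg at hc; exact hne (funext hc)
    classical
    let j := Nat.find hex
    have hj : a j ≠ d j := Nat.find_spec hex
    have hagree : ∀ n, n < j → a n = d n := fun n hn => by
      by_contra hne2; exact absurd (Nat.find_le hne2) (not_le.mpr hn)
    have hdj : a j = false ∧ d j = true := by
      cases hja : a j <;> cases hjd : d j
      · rw [hja, hjd] at hj; exact absurd rfl hj
      · exact ⟨rfl, rfl⟩
      · exfalso
        have := gmap_lt_of_diff (fun n hn => (hagree n hn).symm) hjd hja
        linarith [hz.1]
      · rw [hja, hjd] at hj; exact absurd rfl hj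
    have hjK : j < K := by
      by_contra hc
      push_neg at hc
      rw [hK j hc] at hdj
      simp [hv] at hdj
    have := (gmap_sub_bounds hagree hdj.1 hdj.2).1
    have hmono : (1/3:ℝ)^K ≤ (1/3)^(j+1) := by
      apply pow_le_pow_of_le_one (by norm_num) (by norm_num); omega
    linarith [hz.2]

lemma ev_of_endpoint {a : ℕ → Bool} (h : IsEndpointOf Cset (gmap a)) :
    evC a true ∨ evC a false := by
  obtain ⟨δ, hδ, hgap⟩ := h
  obtain ⟨p0, hp0⟩ := exists_pow_lt_of_lt_one hδ (show (1/3:ℝ) < 1 by norm_num)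
  rcases hgap with hgap | hgap
  · left
    refine ⟨p0 + 1, fun n hn => ?_⟩
    by_contra hc
    have hfalse : a n = false := by cases han : a n; rfl; exact absurd han hc
    obtain ⟨p, rfl⟩ : ∃ p, n = p + 1 := ⟨n - 1, by omega⟩
    have hp : p0 ≤ p := by omega
    set t := appr a p true with ht
    have h1 : gmap a < gmap t := appr_gt a p hfalse
    have h2 : gmap t - gmap a ≤ (1/3)^(p+1) := by
      have := appr_close a p true
      rw [abs_le] at this
      linarith [this.2]
    have h3 : (1/3:ℝ)^(p+1) < δ := by
      calc (1/3:ℝ)^(p+1) ≤ (1/3)^p0 := by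
            apply pow_le_pow_of_le_one (by norm_num) (by norm_num); omega
        _ < δ := hp0
    have : gmap t ∈ Ioo (gmap a) (gmap a + δ) ∩ Cset :=
      ⟨⟨h1, by linarith⟩, ⟨t, rfl⟩⟩
    rw [hgap] at this
    exact this
  · right
    refine ⟨p0 + 1, fun n hn => ?_⟩
    by_contra hc
    have htrue : a n = true := by cases han : a n; exact absurd han hc; rfl
    obtain ⟨p, rfl⟩ : ∃ p, n = p + 1 := ⟨n - 1, by omega⟩
    have hp : p0 ≤ p := by omega
    set t := appr a p false with ht
    have h1 : gmap t < gmap a := appr_lt a p htrue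
    have h2 : gmap a - gmap t ≤ (1/3)^(p+1) := by
      have := appr_close a p false
      rw [abs_le] at this
      linarith [this.1]
    have h3 : (1/3:ℝ)^(p+1) < δ := by
      calc (1/3:ℝ)^(p+1) ≤ (1/3)^p0 := by
            apply pow_le_pow_of_le_one (by norm_num) (by norm_num); omega
        _ < δ := hp0
    have : gmap t ∈ Ioo (gmap a - δ) (gmap a) ∩ Cset :=
      ⟨⟨by linarith, h1⟩, ⟨t, rfl⟩⟩
    rw [hgap] at this
    exact this


/-! ### The length function -/

/-- penalty at position `n` : digits `n` and `n+1` agree -/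
def pen (a : ℕ → Bool) (n : ℕ) : ℝ := if a (n+1) = a n then 1/(n+1 : ℝ) else 0

lemma pen_nonneg (a n) : 0 ≤ pen a n := by
  unfold pen; split <;> positivity

lemma pen_le (a n) : pen a n ≤ 1/(n+1 : ℝ) := by
  unfold pen; split
  · exact le_rfl
  · positivity

/-- partial penalty sums -/
def Psum (a : ℕ → Bool) (m : ℕ) : ℝ := ∑ n ∈ Finset.range m, pen a n

lemma Psum_nonneg (a m) : 0 ≤ Psum a m :=
  Finset.sum_nonneg fun n _ => pen_nonneg a n

lemma Psum_mono (a) : Monotone (Psum a) := by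
  intro m m' h
  apply Finset.sum_le_sum_of_subset_of_nonneg (Finset.range_subset_range.mpr h)
  intro n _ _
  exact pen_nonneg a n

lemma Psum_congr {a b : ℕ → Bool} {m : ℕ} (h : ∀ n, n ≤ m → a n = b n) :
    Psum a m = Psum b m := by
  apply Finset.sum_congr rfl
  intro n hn
  have hn' := Finset.mem_range.mp hn
  unfold pen
  rw [h n (by omega), h (n+1) (by omega)]

/-- the total penalty, in `ℝ≥0∞` -/
def Sval (a : ℕ → Bool) : ℝ≥0∞ := ⨆ m, ENNReal.ofReal (Psum a m)

/-- the length value at the point coded by `a` -/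
def Fval (a : ℕ → Bool) : ℝ := if Sval a = ⊤ then 0 else Real.exp (-(Sval a).toReal)

lemma Fval_nonneg (a) : 0 ≤ Fval a := by
  unfold Fval; split
  · exact le_rfl
  · exact (Real.exp_pos _).le

lemma Psum_le_toReal {a : ℕ → Bool} (h : Sval a ≠ ⊤) (m : ℕ) :
    Psum a m ≤ (Sval a).toReal := by
  have h1 : ENNReal.ofReal (Psum a m) ≤ Sval a := le_iSup (fun m => ENNReal.ofReal (Psum a m)) m
  have := ENNReal.toReal_mono h h1
  rwa [ENNReal.toReal_ofReal (Psum_nonneg a m)] at this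

lemma Fval_le (a : ℕ → Bool) (m : ℕ) : Fval a ≤ Real.exp (-(Psum a m)) := by
  unfold Fval
  split
  · positivity
  · next h =>
    apply Real.exp_le_exp.mpr
    simp only [neg_le_neg_iff]
    exact Psum_le_toReal h m

lemma Sval_ne_top_of_bdd {a : ℕ → Bool} {M : ℝ} (h : ∀ m, Psum a m ≤ M) :
    Sval a ≠ ⊤ ∧ (Sval a).toReal ≤ M := by
  have hM : (0:ℝ) ≤ M := le_trans (Psum_nonneg a 0) (h 0)
  have h1 : Sval a ≤ ENNReal.ofReal M := by
    apply iSup_le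
    intro m
    exact ENNReal.ofReal_le_ofReal (h m)
  constructor
  · exact ne_top_of_le_ne_top ENNReal.ofReal_ne_top h1
  · have := ENNReal.toReal_mono ENNReal.ofReal_ne_top h1
    rwa [ENNReal.toReal_ofReal hM] at this

lemma Sval_eq_top_of_unbdd {a : ℕ → Bool} (h : ∀ M : ℝ, ∃ m, M ≤ Psum a m) :
    Sval a = ⊤ := by
  by_contra hc
  obtain ⟨m, hm⟩ := h ((Sval a).toReal + 1)
  have := Psum_le_toReal hc m
  linarith

lemma tendsto_Psum_toReal {a : ℕ → Bool} (h : Sval a ≠ ⊤) :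
    Tendsto (Psum a) atTop (𝓝 (Sval a).toReal) := by
  have hbdd : BddAbove (Set.range (Psum a)) := by
    refine ⟨(Sval a).toReal, ?_⟩
    rintro x ⟨m, rfl⟩
    exact Psum_le_toReal h m
  have h1 := tendsto_atTop_ciSup (Psum_mono a) hbdd
  have h2 : (⨆ m, Psum a m) = (Sval a).toReal := by
    apply le_antisymm
    · exact ciSup_le (Psum_le_toReal h)
    · by_contra hc
      push_neg at hc
      have hub : ∀ m, Psum a m ≤ (⨆ m, Psum a m) := fun m => le_ciSup hbdd m
      have h3 : Sval a ≤ ENNReal.ofReal (⨆ m, Psum a m) := by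
        apply iSup_le
        intro m
        exact ENNReal.ofReal_le_ofReal (hub m)
      have h4 := ENNReal.toReal_mono ENNReal.ofReal_ne_top h3
      rw [ENNReal.toReal_ofReal (le_trans (Psum_nonneg a 0) (hub 0))] at h4
      linarith
  rwa [h2] at h1

/-- the key limit : `exp (-Psum a m) → Fval a` -/
lemma tendsto_exp_neg_Psum {a : ℕ → Bool} :
    Tendsto (fun m => Real.exp (-(Psum a m))) atTop (𝓝 (Fval a)) := by
  by_cases h : Sval a = ⊤
  · have hunbdd : Tendsto (Psum a) atTop atTop := by
      apply tendsto_atTop_atTop_of_monotone' (Psum_mono a)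
      intro hbdd
      obtain ⟨M, hM⟩ := hbdd
      have : ∀ m, Psum a m ≤ M := fun m => hM ⟨m, rfl⟩
      exact absurd h (Sval_ne_top_of_bdd this).1
    have : Tendsto (fun m => -(Psum a m)) atTop atBot := tendsto_neg_atTop_atBot.comp hunbdd
    have h2 := Real.tendsto_exp_atBot.comp this
    unfold Fval
    rw [if_pos h]
    exact h2
  · have h1 := tendsto_Psum_toReal h
    have h2 : Tendsto (fun m => Real.exp (-(Psum a m))) atTop (𝓝 (Real.exp (-(Sval a).toReal))) :=
      (Real.continuous_exp.tendsto _).comp (h1.neg)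
    unfold Fval
    rw [if_neg h]
    exact h2

/-- the length function on ℝ -/
def lfun (x : ℝ) : ℝ := if h : ∃ a, gmap a = x then Fval h.choose else 0

lemma lfun_gmap (a : ℕ → Bool) : lfun (gmap a) = Fval a := by
  have h : ∃ b, gmap b = gmap a := ⟨a, rfl⟩
  rw [lfun, dif_pos h]
  congr 1
  exact gmap_injective h.choose_spec

lemma lfun_nonneg (x : ℝ) : 0 ≤ lfun x := by
  unfold lfun; split
  · exact Fval_nonneg _
  · exact le_rfl

/-- harmonic partial sums -/
lemma Psum_ev_unbdd {a : ℕ → Bool} {v : Bool} {K : ℕ} (h : ∀ n, K ≤ n → a n = v) :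
    Tendsto (Psum a) atTop atTop := by
  have hpen : ∀ n, K ≤ n → pen a n = 1/(n+1 : ℝ) := by
    intro n hn
    unfold pen
    rw [h n hn, h (n+1) (by omega)]
    simp
  set H : ℕ → ℝ := fun m => ∑ n ∈ Finset.range m, (1/(n+1 : ℝ)) with hH
  have hHtop : Tendsto H atTop atTop := by
    exact Real.tendsto_sum_range_one_div_nat_succ_atTop
  have hbound : ∀ m, K ≤ m → H m - H K ≤ Psum a m := by
    intro m hm
    have hsplit : H m - H K = ∑ n ∈ Finset.Ico K m, (1/(n+1 : ℝ)) := by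
      rw [hH]
      rw [Finset.sum_Ico_eq_sub _ hm]
    rw [hsplit]
    have h1 : ∑ n ∈ Finset.Ico K m, (1/(n+1 : ℝ)) = ∑ n ∈ Finset.Ico K m, pen a n := by
      apply Finset.sum_congr rfl
      intro n hn
      exact (hpen n (Finset.mem_Ico.mp hn).1).symm
    rw [h1]
    unfold Psum
    apply Finset.sum_le_sum_of_subset_of_nonneg
    · intro n hn
      rw [Finset.mem_range]
      exact (Finset.mem_Ico.mp hn).2
    · intro n _ _
      exact pen_nonneg a n
  have hHtop2 : Tendsto (fun m => H m - H K) atTop atTop := by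
    simp only [sub_eq_add_neg]
    exact tendsto_atTop_add_const_right atTop (-(H K)) hHtop
  apply tendsto_atTop_mono' _ _ hHtop2
  filter_upwards [eventually_ge_atTop K] with m hm
  exact hbound m hm

lemma Sval_eq_top_of_ev {a : ℕ → Bool} {v : Bool} {K : ℕ} (h : ∀ n, K ≤ n → a n = v) :
    Sval a = ⊤ :=
  Sval_eq_top_of_unbdd (fun M => ((Psum_ev_unbdd h).eventually_ge_atTop M).exists)

lemma Psum_appr_le (a : ℕ → Bool) (p : ℕ) (v : Bool) (m : ℕ) :
    Psum (appr a p v) m ≤ Psum a p + 1/(p+1 : ℝ) := by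
  set t := appr a p v with ht
  set g : ℕ → ℝ := fun n => if n < p then pen a n else if n = p then 1/(p+1 : ℝ) else 0 with hg
  have hgnn : ∀ n, 0 ≤ g n := by
    intro n
    rw [hg]
    dsimp only
    split
    · exact pen_nonneg a n
    · split <;> positivity
  have hterm : ∀ n, pen t n ≤ g n := by
    intro n
    rw [hg]
    dsimp only
    rcases lt_trichotomy n p with hn | hn | hn
    · rw [if_pos hn]
      have : pen t n = pen a n := by
        unfold pen
        rw [ht, appr_agree a p v n (by omega), appr_agree a p v (n+1) (by omega)]
      rw [this]
    · rw [if_neg (by omega), if_pos hn, hn]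
      exact pen_le t p
    · rw [if_neg (by omega), if_neg (by omega)]
      unfold pen
      rw [ht, if_neg (appr_alt a p v n hn)]
  have h1 : Psum t m ≤ ∑ n ∈ Finset.range m, g n :=
    Finset.sum_le_sum (fun n _ => hterm n)
  have h2 : ∑ n ∈ Finset.range m, g n ≤ ∑ n ∈ Finset.range (max m (p+1)), g n := by
    apply Finset.sum_le_sum_of_subset_of_nonneg
    · apply Finset.range_subset_range.mpr
      omega
    · intro n _ _
      exact hgnn n
  have h3 : ∑ n ∈ Finset.range (max m (p+1)), g n = ∑ n ∈ Finset.range (p+1), g n := by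
    symm
    apply Finset.sum_subset
    · apply Finset.range_subset_range.mpr
      omega
    · intro n _ hn
      rw [Finset.mem_range] at hn
      push_neg at hn
      rw [hg]
      dsimp only
      rw [if_neg (by omega), if_neg (by omega)]
  have h4 : ∑ n ∈ Finset.range (p+1), g n = Psum a p + 1/(p+1 : ℝ) := by
    rw [Finset.sum_range_succ]
    congr 1
    · apply Finset.sum_congr rfl
      intro n hn
      rw [Finset.mem_range] at hn
      rw [hg]
      dsimp only
      rw [if_pos hn]
    · rw [hg]
      dsimp only
      rw [if_neg (by omega), if_pos rfl]
  linarith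

lemma Fval_appr_ge (a : ℕ → Bool) (p : ℕ) (v : Bool) :
    Real.exp (-(Psum a p + 1/(p+1 : ℝ))) ≤ Fval (appr a p v) := by
  have hb := Sval_ne_top_of_bdd (Psum_appr_le a p v)
  unfold Fval
  rw [if_neg hb.1]
  apply Real.exp_le_exp.mpr
  simp only [neg_le_neg_iff]
  exact hb.2

lemma Fval_appr_pos (a : ℕ → Bool) (p : ℕ) (v : Bool) : 0 < Fval (appr a p v) :=
  lt_of_lt_of_le (Real.exp_pos _) (Fval_appr_ge a p v)


/-! ### limsup machinery -/

lemma limsup_eq_of_bounds {F : Filter ℝ} {l : ℝ → ℝ} {c : ℝ}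
    (h1 : ∀ ε : ℝ, 0 < ε → ∀ᶠ y in F, l y ≤ c + ε)
    (h2 : ∀ ε : ℝ, 0 < ε → ∃ᶠ y in F, c - ε < l y) :
    Filter.limsup l F = c := by
  have hS : ∀ b ∈ {a : ℝ | ∀ᶠ y in F, l y ≤ a}, c ≤ b := by
    intro b hb
    by_contra hcon
    push_neg at hcon
    have hfreq := h2 ((c - b)/2) (by linarith)
    obtain ⟨y, hy1, hy2⟩ := (hfreq.and_eventually hb).exists
    linarith
  rw [Filter.limsup_eq]
  apply le_antisymm
  · by_contra hcon
    push_neg at hcon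
    set d := sInf {a : ℝ | ∀ᶠ y in F, l y ≤ a} with hd
    have hmem : (c + (d - c)/2) ∈ {a : ℝ | ∀ᶠ y in F, l y ≤ a} := h1 _ (by linarith)
    have := csInf_le ⟨c, hS⟩ hmem
    rw [← hd] at this
    linarith
  · exact le_csInf ⟨c + 1, h1 1 one_pos⟩ hS

lemma eventually_lfun_le {a : ℕ → Bool} {s : Set ℝ} (hs : s ⊆ Cset) (m : ℕ) :
    ∀ᶠ y in 𝓝[s] (gmap a), lfun y ≤ Real.exp (-(Psum a m)) := by
  rw [eventually_nhdsWithin_iff, Metric.eventually_nhds_iff]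
  refine ⟨(1/3)^(m+1), by positivity, ?_⟩
  intro y hdist hy
  obtain ⟨b, rfl⟩ := hs hy
  rw [Real.dist_eq] at hdist
  have hagree : ∀ n, n ≤ m → b n = a n := agree_of_close hdist
  rw [lfun_gmap]
  calc Fval b ≤ Real.exp (-(Psum b m)) := Fval_le b m
    _ = Real.exp (-(Psum a m)) := by rw [Psum_congr hagree]

lemma h1_any {a : ℕ → Bool} {s : Set ℝ} (hs : s ⊆ Cset) :
    ∀ ε : ℝ, 0 < ε → ∀ᶠ y in 𝓝[s] (gmap a), lfun y ≤ Fval a + ε := by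
  intro ε hε
  have hev : ∀ᶠ m in atTop, Real.exp (-(Psum a m)) < Fval a + ε :=
    tendsto_exp_neg_Psum.eventually_lt_const (by linarith)
  obtain ⟨m0, hm0⟩ := hev.exists
  exact (eventually_lfun_le hs m0).mono (fun y hy => le_trans hy (le_of_lt hm0))

lemma eventually_exp_gt {a : ℕ → Bool} {ε : ℝ} (hε : 0 < ε) :
    ∀ᶠ p in atTop, Fval a - ε < Real.exp (-(Psum a p + 1/(p+1 : ℝ))) := by
  by_cases h : Sval a = ⊤
  · apply Eventually.of_forall
    intro p
    have h0 : Fval a = 0 := by unfold Fval; rw [if_pos h]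
    rw [h0]
    have := Real.exp_pos (-(Psum a p + 1/(p+1:ℝ)))
    linarith
  · have h1 : Tendsto (fun p : ℕ => Psum a p + 1/(p+1 : ℝ)) atTop (𝓝 ((Sval a).toReal + 0)) :=
      (tendsto_Psum_toReal h).add tendsto_one_div_add_atTop_nhds_zero_nat
    rw [add_zero] at h1
    have h2 : Tendsto (fun p : ℕ => Real.exp (-(Psum a p + 1/(p+1 : ℝ)))) atTop
        (𝓝 (Real.exp (-(Sval a).toReal))) := (Real.continuous_exp.tendsto _).comp h1.neg
    have h3 : Real.exp (-(Sval a).toReal) = Fval a := by unfold Fval; rw [if_neg h]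
    rw [h3] at h2
    exact h2.eventually_const_lt (by linarith)

/-- the right-sided limsup at a point whose code has infinitely many `false`s -/
lemma limsup_right {a : ℕ → Bool} (hinf : ∀ K, ∃ n, K ≤ n ∧ a n = false) :
    Filter.limsup lfun (𝓝[Cset ∩ Ioi (gmap a)] (gmap a)) = lfun (gmap a) := by
  rw [lfun_gmap]
  apply limsup_eq_of_bounds
  · exact h1_any Set.inter_subset_left
  · intro ε hε
    rw [Filter.frequently_iff]
    intro U hU
    obtain ⟨r, hr, hsub⟩ := Metric.mem_nhdsWithin_iff.mp hU
    obtain ⟨p0, hp0⟩ := exists_pow_lt_of_lt_one hr (show (1/3:ℝ) < 1 by norm_num)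
    obtain ⟨P1, hP1⟩ := eventually_atTop.mp (eventually_exp_gt (a := a) hε)
    obtain ⟨n, hn, hfalse⟩ := hinf (max p0 P1 + 1)
    obtain ⟨p, rfl⟩ : ∃ p, n = p + 1 := ⟨n - 1, by omega⟩
    have hp0' : p0 ≤ p := by omega
    have hP1' : P1 ≤ p := by omega
    set y := gmap (appr a p true) with hy
    have hclose : dist y (gmap a) < r := by
      rw [Real.dist_eq]
      calc |y - gmap a| ≤ (1/3)^(p+1) := appr_close a p true
        _ ≤ (1/3)^p0 := by
            apply pow_le_pow_of_le_one (by norm_num) (by norm_num); omega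
        _ < r := hp0
    refine ⟨y, hsub ⟨Metric.mem_ball.mpr hclose, ⟨appr a p true, rfl⟩, ?_⟩, ?_⟩
    · exact appr_gt a p hfalse
    · rw [hy, lfun_gmap]
      calc Fval a - ε < Real.exp (-(Psum a p + 1/(p+1 : ℝ))) := hP1 p hP1'
        _ ≤ Fval (appr a p true) := Fval_appr_ge a p true

/-- the left-sided limsup at a point whose code has infinitely many `true`s -/
lemma limsup_left {a : ℕ → Bool} (hinf : ∀ K, ∃ n, K ≤ n ∧ a n = true) :
    Filter.limsup lfun (𝓝[Cset ∩ Iio (gmap a)] (gmap a)) = lfun (gmap a) := by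
  rw [lfun_gmap]
  apply limsup_eq_of_bounds
  · exact h1_any Set.inter_subset_left
  · intro ε hε
    rw [Filter.frequently_iff]
    intro U hU
    obtain ⟨r, hr, hsub⟩ := Metric.mem_nhdsWithin_iff.mp hU
    obtain ⟨p0, hp0⟩ := exists_pow_lt_of_lt_one hr (show (1/3:ℝ) < 1 by norm_num)
    obtain ⟨P1, hP1⟩ := eventually_atTop.mp (eventually_exp_gt (a := a) hε)
    obtain ⟨n, hn, htrue⟩ := hinf (max p0 P1 + 1)
    obtain ⟨p, rfl⟩ : ∃ p, n = p + 1 := ⟨n - 1, by omega⟩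
    have hp0' : p0 ≤ p := by omega
    have hP1' : P1 ≤ p := by omega
    set y := gmap (appr a p false) with hy
    have hclose : dist y (gmap a) < r := by
      rw [Real.dist_eq]
      calc |y - gmap a| ≤ (1/3)^(p+1) := appr_close a p false
        _ ≤ (1/3)^p0 := by
            apply pow_le_pow_of_le_one (by norm_num) (by norm_num); omega
        _ < r := hp0
    refine ⟨y, hsub ⟨Metric.mem_ball.mpr hclose, ⟨appr a p false, rfl⟩, ?_⟩, ?_⟩
    · exact appr_lt a p htrue
    · rw [hy, lfun_gmap]
      calc Fval a - ε < Real.exp (-(Psum a p + 1/(p+1 : ℝ))) := hP1 p hP1'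
        _ ≤ Fval (appr a p false) := Fval_appr_ge a p false


lemma lfun_endpoint_zero {a : ℕ → Bool} {v : Bool} {K : ℕ} (h : ∀ n, K ≤ n → a n = v) :
    lfun (gmap a) = 0 := by
  rw [lfun_gmap]
  unfold Fval
  rw [if_pos (Sval_eq_top_of_ev h)]

lemma limsup_punct {a : ℕ → Bool} {v : Bool} {K : ℕ} (h : ∀ n, K ≤ n → a n = v) :
    Filter.limsup lfun (𝓝[Cset \ {gmap a}] (gmap a)) = 0 := by
  apply limsup_eq_of_bounds
  · intro ε hε
    have hb := h1_any (a := a) (s := Cset \ {gmap a}) Set.diff_subset ε hε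
    have h0 : Fval a = 0 := by unfold Fval; rw [if_pos (Sval_eq_top_of_ev h)]
    rw [h0, zero_add] at hb
    rwa [zero_add]
  · intro ε hε
    rw [Filter.frequently_iff]
    intro U hU
    obtain ⟨r, hr, hsub⟩ := Metric.mem_nhdsWithin_iff.mp hU
    obtain ⟨p0, hp0⟩ := exists_pow_lt_of_lt_one hr (show (1/3:ℝ) < 1 by norm_num)
    set b := appr a p0 (!(a (p0+1))) with hb
    have hbne : gmap b ≠ gmap a := fun hEq =>
      appr_ne a p0 _ (by cases a (p0+1) <;> simp) (gmap_injective hEq)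
    have hclose : dist (gmap b) (gmap a) < r := by
      rw [Real.dist_eq]
      calc |gmap b - gmap a| ≤ (1/3)^(p0+1) := appr_close a p0 _
        _ ≤ (1/3)^p0 := by
            apply pow_le_pow_of_le_one (by norm_num) (by norm_num); omega
        _ < r := hp0
    refine ⟨gmap b, hsub ⟨Metric.mem_ball.mpr hclose, ⟨b, rfl⟩, hbne⟩, ?_⟩
    have := lfun_nonneg (gmap b)
    linarith

lemma dense_pos : Cset ⊆ closure {x | x ∈ Cset ∧ 0 < lfun x} := by
  rintro x ⟨a, rfl⟩
  rw [Metric.mem_closure_iff]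
  intro ε hε
  obtain ⟨p0, hp0⟩ := exists_pow_lt_of_lt_one hε (show (1/3:ℝ) < 1 by norm_num)
  refine ⟨gmap (appr a p0 true), ⟨⟨_, rfl⟩, ?_⟩, ?_⟩
  · rw [lfun_gmap]
    exact Fval_appr_pos a p0 true
  · rw [Real.dist_eq, abs_sub_comm]
    calc |gmap (appr a p0 true) - gmap a| ≤ (1/3)^(p0+1) := appr_close a p0 true
      _ ≤ (1/3)^p0 := by
          apply pow_le_pow_of_le_one (by norm_num) (by norm_num); omega
      _ < ε := hp0

end SHCS

end SHCS

/-- Theorem: there exists a straight hairy Cantor set in the plane. -/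
theorem exists_straight_hairy_cantor_set :
    ∃ X : Set (ℝ × ℝ), IsStraightHairyCantorSet X := by
  refine ⟨{p : ℝ × ℝ | p.1 ∈ SHCS.Cset ∧ 0 ≤ p.2 ∧ p.2 ≤ SHCS.lfun p.1},
    SHCS.Cset, SHCS.lfun, ?_, ?_, rfl, SHCS.dense_pos, ?_, ?_⟩
  · exact ⟨⟨SHCS.gmap (fun _ => false), ⟨fun _ => false, rfl⟩⟩,
      SHCS.isCompact_Cset, SHCS.perfect_Cset, SHCS.isTotallyDisconnected_Cset⟩
  · intro x _
    exact SHCS.lfun_nonneg x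
  · rintro x ⟨a, rfl⟩ hend
    rcases SHCS.ev_of_endpoint hend with ⟨K, h⟩ | ⟨K, h⟩
    · exact ⟨SHCS.lfun_endpoint_zero h, SHCS.limsup_punct h⟩
    · exact ⟨SHCS.lfun_endpoint_zero h, SHCS.limsup_punct h⟩
  · rintro x ⟨a, rfl⟩ hnend
    have hT : ∀ K, ∃ n, K ≤ n ∧ a n = true := by
      intro K
      by_contra hc
      push_neg at hc
      refine hnend (SHCS.endpoint_of_ev (v := false) ⟨K, fun n hn => ?_⟩)
      cases hcase : a n
      · rfl
      · exact absurd hcase (hc n hn)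
    have hF : ∀ K, ∃ n, K ≤ n ∧ a n = false := by
      intro K
      by_contra hc
      push_neg at hc
      refine hnend (SHCS.endpoint_of_ev (v := true) ⟨K, fun n hn => ?_⟩)
      cases hcase : a n
      · exact absurd hcase (hc n hn)
      · rfl
    exact ⟨SHCS.limsup_left hT, SHCS.limsup_right hF⟩
end

section
/- No straight hairy Cantor set X ⊆ ℝ² is locally connected. -/
open Set Filter Topology Metric

/-!
The connected components of `X` are its hairs: the first-coordinate projection maps each
component onto a connected subset of the totally disconnected base `C`. If `X` were locally
connected, this projection would be locally constant; composing it with the continuous section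
`t ↦ (t, 0)` makes the identity of `C` locally constant, i.e. `C` discrete, which is impossible
for a nonempty perfect set.
-/

theorem IsLocallyConstant.of_continuous {X Y : Type*} [TopologicalSpace X] [TopologicalSpace Y]
    [LocallyConnectedSpace X] [TotallyDisconnectedSpace Y] {f : X → Y} (hf : Continuous f) :
    IsLocallyConstant f :=
  .of_constant_on_connected_components fun x _ hy =>
    (hf.image_connectedComponent_eq_singleton x).subset (mem_image_of_mem f hy)

theorem DiscreteTopology.of_continuous_rightInverse {X Y : Type*} [TopologicalSpace X]
    [TopologicalSpace Y] [LocallyConnectedSpace X] [TotallyDisconnectedSpace Y] {f : X → Y}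
    {g : Y → X} (hf : Continuous f) (hg : Continuous g) (hfg : Function.RightInverse g f) :
    DiscreteTopology Y := by
  have hid : IsLocallyConstant (f ∘ g) := (IsLocallyConstant.of_continuous hf).comp_continuous hg
  rw [hfg.comp_eq_id] at hid
  exact discreteTopology_iff_isOpen_singleton.2 hid.isOpen_fiber

theorem Preperfect.not_isDiscrete {α : Type*} [TopologicalSpace α] {C : Set α}
    (hC : Preperfect C) (hne : C.Nonempty) : ¬ IsDiscrete C := by
  intro hd
  obtain ⟨x, hx⟩ := hne
  have hacc : (𝓝[C] x ⊓ 𝓟 {x}ᶜ).NeBot := by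
    simpa [AccPt, nhdsWithin, inf_right_comm] using hC x hx
  rw [hd.nhdsWithin x hx, inf_principal_eq_bot.2 (by simp)] at hacc
  exact hacc.ne rfl

/-- Theorem: no straight hairy Cantor set is locally connected (in the subspace
topology from ℝ²). -/
theorem straight_hairy_cantor_set_not_locallyConnected
    (X : Set (ℝ × ℝ)) (h : IsStraightHairyCantorSet X) :
    ¬ LocallyConnectedSpace X := by
  intro hX
  obtain ⟨C, l, ⟨hne, -, hperf, htd⟩, hl_nonneg, rfl, -⟩ := h
  have : TotallyDisconnectedSpace C := totallyDisconnectedSpace_subtype_iff.2 htd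
  let base : {p : ℝ × ℝ | p.1 ∈ C ∧ 0 ≤ p.2 ∧ p.2 ≤ l p.1} → C := fun p => ⟨p.1.1, p.2.1⟩
  let foot : C → {p : ℝ × ℝ | p.1 ∈ C ∧ 0 ≤ p.2 ∧ p.2 ≤ l p.1} :=
    fun t => ⟨(t, 0), t.2, le_rfl, hl_nonneg t t.2⟩
  have : DiscreteTopology C :=
    .of_continuous_rightInverse (f := base) (g := foot) (by fun_prop) (by fun_prop) fun _ => rfl
  exact hperf.acc.not_isDiscrete hne ⟨this⟩
end

section
/- Let X and Y be straight hairy Cantor sets based on the same Cantor set C ⊆ ℝ, with length functions l^X and l^Y. Let P_n = ⋃_{i=1}^{k_n} J_{n,i}, for n ≥ 0, be a nest of Cantor partitions shrinking to C, with pairwise disjoint nonempty closed intervals J_{n,i}. Assume that whenever J_{n,i} ⊆ J_{n−1,j} for some integers n ≥ 1, i, j, one has 1 − 2^{−(n+1)} < (Max(l^Y, J_{n,i}) / Max(l^Y, J_{n−1,j})) / (Max(l^X, J_{n,i}) / Max(l^X, J_{n−1,j})) < 1 + 2^{−(n+1)}. Then X and Y are ambiently homeomorphic. -/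
open Set Filter Topology Metric

/-- `MaxOn l C J = max { l x : x ∈ J ∩ C }`, expressed as a supremum. -/
noncomputable def MaxOn (l : ℝ → ℝ) (C J : Set ℝ) : ℝ := sSup (l '' (J ∩ C))

/- ### Auxiliary lemmas -/

lemma aux_connected_subset_piece {ι : Type*} [Finite ι] {J : Set ℝ}
    (hJ : IsPreconnected J) (A : ι → Set ℝ) (hcl : ∀ i, IsClosed (A i))
    (hdisj : Pairwise (Function.onFun Disjoint A)) (hsub : J ⊆ ⋃ i, A i)
    (j : ι) (hne : (J ∩ A j).Nonempty) : J ⊆ A j := by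
  classical
  set B : Set ℝ := ⋃ i : {i // i ≠ j}, A i with hB
  have hBclosed : IsClosed B := isClosed_iUnion_of_finite fun i => hcl i
  have hdisjB : ∀ t, t ∈ A j → t ∉ B := by
    intro t ht htB
    obtain ⟨i, hti⟩ := mem_iUnion.1 htB
    exact (hdisj i.2).le_bot ⟨hti, ht⟩
  have hcover' : J ⊆ Bᶜ ∪ (A j)ᶜ := by
    intro t ht
    by_cases h : t ∈ A j
    · exact Or.inl (hdisjB t h)
    · exact Or.inr h
  have h1 : (J ∩ Bᶜ).Nonempty := by
    obtain ⟨t, htJ, htA⟩ := hne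
    exact ⟨t, htJ, hdisjB t htA⟩
  by_contra hcon
  have h2 : (J ∩ (A j)ᶜ).Nonempty := by
    rw [Set.not_subset] at hcon
    obtain ⟨t, htJ, htA⟩ := hcon
    exact ⟨t, htJ, htA⟩
  obtain ⟨t, htJ, htB, htA⟩ :=
    hJ Bᶜ (A j)ᶜ hBclosed.isOpen_compl (hcl j).isOpen_compl hcover' h1 h2
  obtain ⟨i, hti⟩ := mem_iUnion.1 (hsub htJ)
  by_cases h : i = j
  · exact htA (h ▸ hti)
  · exact htB (mem_iUnion.2 ⟨⟨i, h⟩, hti⟩)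

lemma aux_pos_facts {s : Set ℝ} (h : 0 < sSup s) : s.Nonempty ∧ BddAbove s := by
  constructor
  · by_contra hne
    rw [Set.not_nonempty_iff_eq_empty] at hne
    rw [hne, Real.sSup_empty] at h; exact lt_irrefl _ h
  · by_contra hb
    rw [Real.sSup_of_not_bddAbove hb] at h; exact lt_irrefl _ h

lemma aux_prod_le (d n : ℕ) :
    (∏ i ∈ Finset.range d, (1 + ((2:ℝ)⁻¹)^(n+i)/4)) ≤ 1 + ((2:ℝ)⁻¹)^n := by
  induction d generalizing n with
  | zero =>
    simp only [Finset.prod_range_zero]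
    have : (0:ℝ) < ((2:ℝ)⁻¹)^n := by positivity
    linarith
  | succ d ih =>
    rw [Finset.prod_range_succ']
    have h1 : (∏ i ∈ Finset.range d, (1 + ((2:ℝ)⁻¹)^(n+(i+1))/4)) ≤ 1 + ((2:ℝ)⁻¹)^(n+1) := by
      have heq : (∏ i ∈ Finset.range d, (1 + ((2:ℝ)⁻¹)^(n+(i+1))/4))
          = ∏ i ∈ Finset.range d, (1 + ((2:ℝ)⁻¹)^((n+1)+i)/4) :=
        Finset.prod_congr rfl (fun i _ => by rw [show n+(i+1) = (n+1)+i by ring])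
      rw [heq]
      exact ih (n+1)
    have ht0 : (0:ℝ) < ((2:ℝ)⁻¹)^n := by positivity
    have ht1 : ((2:ℝ)⁻¹)^n ≤ 1 := by
      apply pow_le_one₀ <;> norm_num
    have hnn : (0:ℝ) ≤ 1 + ((2:ℝ)⁻¹)^(n+0)/4 := by positivity
    calc (∏ i ∈ Finset.range d, (1 + ((2:ℝ)⁻¹)^(n+(i+1))/4)) * (1 + ((2:ℝ)⁻¹)^(n+0)/4)
        ≤ (1 + ((2:ℝ)⁻¹)^(n+1)) * (1 + ((2:ℝ)⁻¹)^(n+0)/4) := by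
          exact mul_le_mul_of_nonneg_right h1 hnn
      _ ≤ 1 + ((2:ℝ)⁻¹)^n := by
          have : ((2:ℝ)⁻¹)^(n+1) = ((2:ℝ)⁻¹)^n / 2 := by ring
          rw [this]
          simp only [Nat.add_zero]
          nlinarith [ht0, ht1]

lemma aux_prod_ge (d n : ℕ) :
    1 - ((2:ℝ)⁻¹)^n/2 ≤ (∏ i ∈ Finset.range d, (1 - ((2:ℝ)⁻¹)^(n+i)/4)) := by
  induction d generalizing n with
  | zero =>
    simp only [Finset.prod_range_zero]
    have : (0:ℝ) < ((2:ℝ)⁻¹)^n := by positivity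
    linarith
  | succ d ih =>
    rw [Finset.prod_range_succ']
    have h1 : 1 - ((2:ℝ)⁻¹)^(n+1)/2 ≤ (∏ i ∈ Finset.range d, (1 - ((2:ℝ)⁻¹)^(n+(i+1))/4)) := by
      have heq : (∏ i ∈ Finset.range d, (1 - ((2:ℝ)⁻¹)^(n+(i+1))/4))
          = ∏ i ∈ Finset.range d, (1 - ((2:ℝ)⁻¹)^((n+1)+i)/4) :=
        Finset.prod_congr rfl (fun i _ => by rw [show n+(i+1) = (n+1)+i by ring])
      rw [heq]
      exact ih (n+1)
    have ht0 : (0:ℝ) < ((2:ℝ)⁻¹)^n := by positivity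
    have ht1 : ((2:ℝ)⁻¹)^n ≤ 1 := by apply pow_le_one₀ <;> norm_num
    have hnn : (0:ℝ) ≤ 1 - ((2:ℝ)⁻¹)^(n+0)/4 := by
      simp only [Nat.add_zero]; nlinarith
    calc 1 - ((2:ℝ)⁻¹)^n/2
        ≤ (1 - ((2:ℝ)⁻¹)^(n+1)/2) * (1 - ((2:ℝ)⁻¹)^(n+0)/4) := by
          have : ((2:ℝ)⁻¹)^(n+1) = ((2:ℝ)⁻¹)^n / 2 := by ring
          rw [this]
          simp only [Nat.add_zero]
          nlinarith [ht0, ht1]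
      _ ≤ _ := mul_le_mul_of_nonneg_right h1 hnn

lemma aux_ratio_rel (a b a' b' : ℝ) :
    (b'/b)/(a'/a) = (b'/a')/(b/a) := div_div_div_comm b' b a' a

lemma aux_eventually_le_of_limsup {F : Filter ℝ} {l : ℝ → ℝ} {a b : ℝ}
    (h : Filter.limsup l F = a) (hne : ∃ c, ∀ᶠ t in F, l t ≤ c) (hb : a < b) :
    ∀ᶠ t in F, l t ≤ b := by
  set S : Set ℝ := {c | ∀ᶠ t in F, l t ≤ c} with hS
  have hSne : S.Nonempty := hne
  have : ¬ (∀ c ∈ S, b ≤ c) := by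
    intro hall
    have := le_csInf hSne hall
    rw [Filter.limsup_eq] at h
    rw [h] at this
    exact absurd this (not_le.2 hb)
  push_neg at this
  obtain ⟨c, hcS, hcb⟩ := this
  exact hcS.mono fun t ht => ht.trans hcb.le

lemma aux_tendsto_sSup (C : Set ℝ) (l : ℝ → ℝ)
    (hl0 : ∀ x ∈ C, 0 ≤ l x)
    (hend : ∀ x ∈ C, IsEndpointOf C x → l x = 0 ∧ Filter.limsup l (𝓝[C \ {x}] x) = 0)
    (hnotend : ∀ x ∈ C, ¬ IsEndpointOf C x →
      Filter.limsup l (𝓝[C ∩ Iio x] x) = l x ∧ Filter.limsup l (𝓝[C ∩ Ioi x] x) = l x)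
    (x : ℝ) (hx : x ∈ C) (J : ℕ → Set ℝ)
    (hJx : ∀ n, x ∈ J n)
    (hU0 : ∃ U, IsOpen U ∧ x ∈ U ∧ U ∩ C ⊆ J 0)
    (hshr : ∀ ε > (0:ℝ), ∃ N, ∀ n ≥ N, J n ⊆ Ioo (x-ε) (x+ε))
    (hbdd : ∀ n, BddAbove (l '' (J n ∩ C))) :
    Tendsto (fun n => sSup (l '' (J n ∩ C))) atTop (𝓝 (l x)) := by
  have hlow : ∀ n, l x ≤ sSup (l '' (J n ∩ C)) := fun n =>
    le_csSup (hbdd n) ⟨x, ⟨hJx n, hx⟩, rfl⟩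
  obtain ⟨U₀, hU₀o, hxU₀, hU₀sub⟩ := hU0
  have hevbound : ∀ᶠ t in 𝓝[C] x, l t ≤ sSup (l '' (J 0 ∩ C)) := by
    filter_upwards [nhdsWithin_le_nhds (hU₀o.mem_nhds hxU₀), self_mem_nhdsWithin] with t htU htC
    exact le_csSup (hbdd 0) ⟨t, ⟨hU₀sub ⟨htU, htC⟩, htC⟩, rfl⟩
  rw [Metric.tendsto_atTop]
  intro ε hε
  have hU : ∃ U, IsOpen U ∧ x ∈ U ∧ ∀ t ∈ U ∩ C, l t ≤ l x + ε/2 := by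
    by_cases hep : IsEndpointOf C x
    · obtain ⟨hlx0, hlim⟩ := hend x hx hep
      have hev : ∀ᶠ t in 𝓝[C \ {x}] x, l t ≤ l x + ε/2 := by
        apply aux_eventually_le_of_limsup hlim
        · exact ⟨_, hevbound.filter_mono (nhdsWithin_mono x diff_subset)⟩
        · rw [hlx0]; linarith
      rw [eventually_nhdsWithin_iff] at hev
      obtain ⟨U, hUsub, hUo, hxU⟩ := _root_.mem_nhds_iff.1 hev
      refine ⟨U, hUo, hxU, fun t ⟨htU, htC⟩ => ?_⟩
      by_cases ht : t = x
      · subst ht; linarith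
      · exact hUsub htU ⟨htC, ht⟩
    · obtain ⟨hlim₁, hlim₂⟩ := hnotend x hx hep
      have hev₁ : ∀ᶠ t in 𝓝[C ∩ Iio x] x, l t ≤ l x + ε/2 := by
        apply aux_eventually_le_of_limsup hlim₁
        · exact ⟨_, hevbound.filter_mono (nhdsWithin_mono x inter_subset_left)⟩
        · linarith
      have hev₂ : ∀ᶠ t in 𝓝[C ∩ Ioi x] x, l t ≤ l x + ε/2 := by
        apply aux_eventually_le_of_limsup hlim₂
        · exact ⟨_, hevbound.filter_mono (nhdsWithin_mono x inter_subset_left)⟩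
        · linarith
      rw [eventually_nhdsWithin_iff] at hev₁ hev₂
      obtain ⟨U₁, hU₁sub, hU₁o, hxU₁⟩ := _root_.mem_nhds_iff.1 hev₁
      obtain ⟨U₂, hU₂sub, hU₂o, hxU₂⟩ := _root_.mem_nhds_iff.1 hev₂
      refine ⟨U₁ ∩ U₂, hU₁o.inter hU₂o, ⟨hxU₁, hxU₂⟩, fun t ⟨⟨ht1, ht2⟩, htC⟩ => ?_⟩
      rcases lt_trichotomy t x with h | h | h
      · exact hU₁sub ht1 ⟨htC, h⟩
      · subst h; linarith
      · exact hU₂sub ht2 ⟨htC, h⟩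
  obtain ⟨U, hUo, hxU, hUbound⟩ := hU
  obtain ⟨δ, hδ, hball⟩ := Metric.isOpen_iff.1 hUo x hxU
  obtain ⟨N, hN⟩ := hshr δ hδ
  refine ⟨N, fun n hn => ?_⟩
  have hsub : J n ⊆ U := fun t ht => by
    have := hN n hn ht
    apply hball
    rw [Metric.mem_ball, Real.dist_eq, abs_sub_lt_iff]
    constructor <;> [linarith [this.2]; linarith [this.1]]
  have hup : sSup (l '' (J n ∩ C)) ≤ l x + ε/2 := by
    apply Real.sSup_le
    · rintro y ⟨t, ⟨htJ, htC⟩, rfl⟩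
      exact hUbound t ⟨hsub htJ, htC⟩
    · have := hl0 x hx; linarith
  rw [Real.dist_eq, abs_sub_lt_iff]
  constructor
  · linarith [hlow n]
  · linarith [hlow n]

/-- Theorem: if straight hairy Cantor sets `X`, `Y` based on the same Cantor set `C`
admit a common nest of Cantor partitions shrinking to `C` along which the relative
maxima of the length functions are comparable up to factors `1 ± 2^{-(n+1)}`, then `X`
and `Y` are ambiently homeomorphic. -/
theorem ambient_homeomorphism_of_matching_partitions
    (C : Set ℝ) (lX lY : ℝ → ℝ) (X Y : Set (ℝ × ℝ))
    (hX : IsStraightHairyCantorSetWith C lX X)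
    (hY : IsStraightHairyCantorSetWith C lY Y)
    -- the nest of Cantor partitions P n = ⋃ i, [u n i, v n i]
    (k : ℕ → ℕ) (u v : (n : ℕ) → Fin (k n) → ℝ)
    (hle : ∀ n i, u n i ≤ v n i)
    (hdisj : ∀ n, Pairwise fun i j : Fin (k n) =>
      Disjoint (Icc (u n i) (v n i)) (Icc (u n j) (v n j)))
    (hcover : ∀ n, C ⊆ ⋃ i, Icc (u n i) (v n i))
    (hfrontier : ∀ n, frontier (⋃ i, Icc (u n i) (v n i)) ⊆ C)
    (hnest : ∀ n, (⋃ i, Icc (u (n+1) i) (v (n+1) i)) ⊆ ⋃ i, Icc (u n i) (v n i))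
    (hshrink : (⋂ n, ⋃ i, Icc (u n i) (v n i)) = C)
    -- comparable relative maxima (level n+1 inside level n, bound 2^{-(n+2)})
    (hratio : ∀ n, ∀ (i : Fin (k (n+1))) (j : Fin (k n)),
      Icc (u (n+1) i) (v (n+1) i) ⊆ Icc (u n j) (v n j) →
        1 - 2 ^ (-(n:ℤ) - 2) <
          (MaxOn lY C (Icc (u (n+1) i) (v (n+1) i)) / MaxOn lY C (Icc (u n j) (v n j))) /
          (MaxOn lX C (Icc (u (n+1) i) (v (n+1) i)) / MaxOn lX C (Icc (u n j) (v n j))) ∧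
        (MaxOn lY C (Icc (u (n+1) i) (v (n+1) i)) / MaxOn lY C (Icc (u n j) (v n j))) /
          (MaxOn lX C (Icc (u (n+1) i) (v (n+1) i)) / MaxOn lX C (Icc (u n j) (v n j))) <
          1 + 2 ^ (-(n:ℤ) - 2)) :
    ∃ φ : (ℝ × ℝ) ≃ₜ (ℝ × ℝ), φ '' X = Y := by
  classical
  obtain ⟨hCant, hlX0, hXeq, _hdX, hendX, hnendX⟩ := hX
  obtain ⟨_, hlY0, hYeq, _hdY, hendY, hnendY⟩ := hY
  obtain ⟨hCne, hCcomp, hCperf, hCtd⟩ := hCant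
  -- choice of the interval containing a given point of C at each level
  have hexi : ∀ (n : ℕ) (x : ℝ), x ∈ C → ∃ i, x ∈ Icc (u n i) (v n i) := fun n x hx =>
    mem_iUnion.1 (hcover n hx)
  choose idx hidx using hexi
  have huniq : ∀ (n : ℕ) (x : ℝ) (hx : x ∈ C) (i : Fin (k n)), x ∈ Icc (u n i) (v n i) →
      i = idx n x hx := by
    intro n x hx i hi
    by_contra hne
    exact (Set.disjoint_left.1 (hdisj n hne)) hi (hidx n x hx)
  -- nesting of the chosen intervals
  have hsubI : ∀ (n : ℕ) (x : ℝ) (hx : x ∈ C),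
      Icc (u (n+1) (idx (n+1) x hx)) (v (n+1) (idx (n+1) x hx)) ⊆
        Icc (u n (idx n x hx)) (v n (idx n x hx)) := by
    intro n x hx
    apply aux_connected_subset_piece isPreconnected_Icc (fun i => Icc (u n i) (v n i))
      (fun i => isClosed_Icc) (hdisj n)
      (fun t ht => hnest n (mem_iUnion.2 ⟨_, ht⟩)) (idx n x hx)
    exact ⟨x, hidx (n+1) x hx, hidx n x hx⟩
  -- each chosen interval is a neighbourhood of x within C
  have hnbhd : ∀ (n : ℕ) (x : ℝ) (hx : x ∈ C), ∃ U, IsOpen U ∧ x ∈ U ∧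
      U ∩ C ⊆ Icc (u n (idx n x hx)) (v n (idx n x hx)) := by
    intro n x hx
    refine ⟨(⋃ i : {i : Fin (k n) // i ≠ idx n x hx}, Icc (u n i.1) (v n i.1))ᶜ,
      (isClosed_iUnion_of_finite fun i => isClosed_Icc).isOpen_compl, ?_, ?_⟩
    · intro hmem
      obtain ⟨i, hi⟩ := mem_iUnion.1 hmem
      exact i.2 (huniq n x hx i.1 hi)
    · rintro t ⟨htU, htC⟩
      have ht := hidx n t htC
      have heq : idx n t htC = idx n x hx := by
        by_contra hne
        exact htU (mem_iUnion.2 ⟨⟨_, hne⟩, ht⟩)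
      rw [heq] at ht; exact ht
  -- the chosen intervals shrink to x
  have hshr : ∀ (x : ℝ) (hx : x ∈ C), ∀ ε > (0:ℝ), ∃ N, ∀ n ≥ N,
      Icc (u n (idx n x hx)) (v n (idx n x hx)) ⊆ Ioo (x-ε) (x+ε) := by
    intro x hx ε hε
    set a : ℕ → ℝ := fun n => u n (idx n x hx) with ha
    set b : ℕ → ℝ := fun n => v n (idx n x hx) with hb
    have hax : ∀ n, a n ≤ x := fun n => (hidx n x hx).1
    have hxb : ∀ n, x ≤ b n := fun n => (hidx n x hx).2
    have hmono : Monotone a := by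
      apply monotone_nat_of_le_succ
      intro n
      exact ((hsubI n x hx) ⟨le_refl _, hle (n+1) _⟩).1
    have hanti : Antitone b := by
      apply antitone_nat_of_succ_le
      intro n
      exact ((hsubI n x hx) ⟨hle (n+1) _, le_refl _⟩).2
    have haba : BddAbove (Set.range a) := ⟨x, by rintro y ⟨n, rfl⟩; exact hax n⟩
    have hbbb : BddBelow (Set.range b) := ⟨x, by rintro y ⟨n, rfl⟩; exact hxb n⟩
    have hA : Tendsto a atTop (𝓝 (⨆ n, a n)) := tendsto_atTop_ciSup hmono haba
    have hB : Tendsto b atTop (𝓝 (⨅ n, b n)) := tendsto_atTop_ciInf hanti hbbb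
    have hAx : (⨆ n, a n) ≤ x := ciSup_le hax
    have hxB : x ≤ (⨅ n, b n) := le_ciInf hxb
    have hABC : Icc (⨆ n, a n) (⨅ n, b n) ⊆ C := by
      rw [← hshrink]
      intro t ht
      refine mem_iInter.2 fun n => mem_iUnion.2 ⟨idx n x hx, ?_, ?_⟩
      · exact le_trans (le_ciSup haba n) ht.1
      · exact le_trans ht.2 (ciInf_le hbbb n)
    have hsub2 : (Icc (⨆ n, a n) (⨅ n, b n)).Subsingleton :=
      hCtd _ hABC isPreconnected_Icc
    have hAB : (⨆ n, a n) = (⨅ n, b n) :=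
      hsub2 ⟨le_refl _, hAx.trans hxB⟩ ⟨hAx.trans hxB, le_refl _⟩
    have hAxe : (⨆ n, a n) = x := le_antisymm hAx (hAB ▸ hxB)
    have hBxe : (⨅ n, b n) = x := hAB ▸ hAxe
    have h1 : ∀ᶠ n in atTop, x - ε < a n := by
      apply hA.eventually (eventually_gt_nhds _)
      rw [hAxe]; linarith
    have h2 : ∀ᶠ n in atTop, b n < x + ε := by
      apply hB.eventually (eventually_lt_nhds _)
      rw [hBxe]; linarith
    obtain ⟨N, hN⟩ := eventually_atTop.1 (h1.and h2)
    refine ⟨N, fun n hn t ht => ?_⟩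
    obtain ⟨hh1, hh2⟩ := hN n hn
    exact ⟨lt_of_lt_of_le hh1 ht.1, lt_of_le_of_lt ht.2 hh2⟩
  -- the scale functions
  set e : ℕ → ℝ := fun n => ((2:ℝ)⁻¹)^n with he
  have hepos : ∀ n, (0:ℝ) < e n := fun n => by positivity
  have hele : ∀ n, e n ≤ 1 := fun n => pow_le_one₀ (by norm_num) (by norm_num)
  have heps : ∀ n : ℕ, (2:ℝ) ^ (-(n:ℤ) - 2) = e n / 4 := by
    intro n
    rw [show (-(n:ℤ) - 2) = -(n:ℤ) + (-2) by ring, zpow_add₀ (two_ne_zero (α := ℝ)),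
      zpow_neg, zpow_natCast, ← inv_pow]
    norm_num
    ring
  set fX : (n : ℕ) → Fin (k n) → ℝ := fun n i => MaxOn lX C (Icc (u n i) (v n i)) with hfX
  set fY : (n : ℕ) → Fin (k n) → ℝ := fun n i => MaxOn lY C (Icc (u n i) (v n i)) with hfY
  have hfXnn : ∀ n i, 0 ≤ fX n i := by
    intro n i
    apply Real.sSup_nonneg
    rintro y ⟨t, ⟨_, htC⟩, rfl⟩; exact hlX0 t htC
  have hfYnn : ∀ n i, 0 ≤ fY n i := by
    intro n i
    apply Real.sSup_nonneg
    rintro y ⟨t, ⟨_, htC⟩, rfl⟩; exact hlY0 t htC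
  have hub : ∀ (n : ℕ) (x : ℝ) (hx : x ∈ C),
      1 - e n / 4 < (fY (n+1) (idx (n+1) x hx) / fY n (idx n x hx)) /
          (fX (n+1) (idx (n+1) x hx) / fX n (idx n x hx)) ∧
      (fY (n+1) (idx (n+1) x hx) / fY n (idx n x hx)) /
          (fX (n+1) (idx (n+1) x hx) / fX n (idx n x hx)) < 1 + e n / 4 := by
    intro n x hx
    have h := hratio n (idx (n+1) x hx) (idx n x hx) (hsubI n x hx)
    rw [heps n] at h
    exact h
  have hMpos : ∀ (n : ℕ) (x : ℝ) (hx : x ∈ C),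
      0 < fX n (idx n x hx) ∧ 0 < fY n (idx n x hx) := by
    intro n x hx
    obtain ⟨h1, _⟩ := hub n x hx
    have h34 : (0:ℝ) < 1 - e n / 4 := by have := hele n; have := hepos n; linarith
    have hRpos : 0 < (fY (n+1) (idx (n+1) x hx) / fY n (idx n x hx)) /
        (fX (n+1) (idx (n+1) x hx) / fX n (idx n x hx)) := lt_trans h34 h1
    have hq : fX (n+1) (idx (n+1) x hx) / fX n (idx n x hx) ≠ 0 := by
      intro h0; rw [h0, div_zero] at hRpos; exact lt_irrefl _ hRpos
    have hXn : fX n (idx n x hx) ≠ 0 := by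
      intro h0; exact hq (by rw [h0, div_zero])
    have hp : fY (n+1) (idx (n+1) x hx) / fY n (idx n x hx) ≠ 0 := by
      intro h0; rw [h0, zero_div] at hRpos; exact lt_irrefl _ hRpos
    have hYn : fY n (idx n x hx) ≠ 0 := by
      intro h0; exact hp (by rw [h0, div_zero])
    exact ⟨(hfXnn n _).lt_of_ne (Ne.symm hXn), (hfYnn n _).lt_of_ne (Ne.symm hYn)⟩
  set cf : (n : ℕ) → (x : ℝ) → x ∈ C → ℝ :=
    fun n x hx => fY n (idx n x hx) / fX n (idx n x hx) with hcf
  have hcpos : ∀ n x (hx : x ∈ C), 0 < cf n x hx := fun n x hx =>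
    div_pos (hMpos n x hx).2 (hMpos n x hx).1
  have hubc : ∀ (n : ℕ) (x : ℝ) (hx : x ∈ C),
      1 - e n / 4 < cf (n+1) x hx / cf n x hx ∧ cf (n+1) x hx / cf n x hx < 1 + e n / 4 := by
    intro n x hx
    have h := hub n x hx
    rwa [aux_ratio_rel _ _ _ _] at h
  have hstep : ∀ (x : ℝ) (hx : x ∈ C) (n d : ℕ),
      cf n x hx * (∏ i ∈ Finset.range d, (1 - e (n+i)/4)) ≤ cf (n+d) x hx ∧
      cf (n+d) x hx ≤ cf n x hx * (∏ i ∈ Finset.range d, (1 + e (n+i)/4)) := by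
    intro x hx n d
    induction d with
    | zero => simp
    | succ d ih =>
      obtain ⟨ih1, ih2⟩ := ih
      obtain ⟨hr1, hr2⟩ := hubc (n+d) x hx
      have hcd := hcpos (n+d) x hx
      have hcd1 := hcpos (n+d+1) x hx
      have hup : cf (n+d+1) x hx ≤ cf (n+d) x hx * (1 + e (n+d)/4) := by
        rw [div_lt_iff₀ hcd] at hr2
        linarith [hr2]
      have hlo : cf (n+d) x hx * (1 - e (n+d)/4) ≤ cf (n+d+1) x hx := by
        rw [lt_div_iff₀ hcd] at hr1
        linarith [hr1]
      have hfacnn : (0:ℝ) ≤ 1 + e (n+d)/4 := by have := hepos (n+d); linarith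
      have hfacnn2 : (0:ℝ) ≤ 1 - e (n+d)/4 := by
        have := hele (n+d); have := hepos (n+d); linarith
      constructor
      · rw [show n + (d+1) = (n+d)+1 by ring, Finset.prod_range_succ]
        calc cf n x hx * ((∏ i ∈ Finset.range d, (1 - e (n+i)/4)) * (1 - e (n+d)/4))
            = (cf n x hx * ∏ i ∈ Finset.range d, (1 - e (n+i)/4)) * (1 - e (n+d)/4) := by ring
          _ ≤ cf (n+d) x hx * (1 - e (n+d)/4) := mul_le_mul_of_nonneg_right ih1 hfacnn2
          _ ≤ cf ((n+d)+1) x hx := hlo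
      · rw [show n + (d+1) = (n+d)+1 by ring, Finset.prod_range_succ]
        calc cf ((n+d)+1) x hx ≤ cf (n+d) x hx * (1 + e (n+d)/4) := hup
          _ ≤ (cf n x hx * ∏ i ∈ Finset.range d, (1 + e (n+i)/4)) * (1 + e (n+d)/4) :=
              mul_le_mul_of_nonneg_right ih2 hfacnn
          _ = cf n x hx * ((∏ i ∈ Finset.range d, (1 + e (n+i)/4)) * (1 + e (n+d)/4)) := by ring
  have hbound : ∀ (x : ℝ) (hx : x ∈ C) (n d : ℕ),
      cf n x hx * (1 - e n / 2) ≤ cf (n+d) x hx ∧ cf (n+d) x hx ≤ cf n x hx * (1 + e n) := by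
    intro x hx n d
    obtain ⟨h1, h2⟩ := hstep x hx n d
    constructor
    · exact le_trans (mul_le_mul_of_nonneg_left (aux_prod_ge d n) (hcpos n x hx).le) h1
    · exact le_trans h2 (mul_le_mul_of_nonneg_left (aux_prod_le d n) (hcpos n x hx).le)
  have hcauchy : ∀ (x : ℝ) (hx : x ∈ C), CauchySeq (fun n => cf n x hx) := by
    intro x hx
    apply cauchySeq_of_le_geometric (2⁻¹ : ℝ) (2 * cf 0 x hx) (by norm_num)
    intro n
    have hb1 := hbound x hx n 1
    have hb2 := hbound x hx 0 n
    rw [Nat.zero_add] at hb2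
    have hcn := hcpos n x hx
    have hc0 := hcpos 0 x hx
    have he0 : e 0 = 1 := pow_zero _
    rw [Real.dist_eq, abs_sub_le_iff]
    have hen := hepos n
    constructor
    · have h := hb1.1
      have hcle : cf n x hx ≤ 2 * cf 0 x hx := by
        have := hb2.2; rw [he0] at this; linarith
      have hkey : cf n x hx - cf (n+1) x hx ≤ cf n x hx * (e n / 2) := by nlinarith
      calc cf n x hx - cf (n+1) x hx ≤ cf n x hx * (e n / 2) := hkey
        _ ≤ 2 * cf 0 x hx * (2⁻¹)^n := by
            have he' : (2⁻¹:ℝ)^n = e n := rfl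
            nlinarith
    · have h := hb1.2
      have hcle : cf n x hx ≤ 2 * cf 0 x hx := by
        have := hb2.2; rw [he0] at this; linarith
      have hkey : cf (n+1) x hx - cf n x hx ≤ cf n x hx * e n := by nlinarith
      calc cf (n+1) x hx - cf n x hx ≤ cf n x hx * e n := hkey
        _ ≤ 2 * cf 0 x hx * (2⁻¹)^n := by
            have he' : (2⁻¹:ℝ)^n = e n := rfl
            nlinarith
  have hlimex : ∀ (x : ℝ), ∃ LL : ℝ, ∀ hx : x ∈ C,
      Tendsto (fun n => cf n x hx) atTop (𝓝 LL) := by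
    intro x
    by_cases hx : x ∈ C
    · obtain ⟨LL, hLL⟩ := cauchySeq_tendsto_of_complete (hcauchy x hx)
      exact ⟨LL, fun hx' => hLL⟩
    · exact ⟨1, fun hx' => absurd hx' hx⟩
  choose L hL using hlimex
  have hLbound : ∀ (x : ℝ) (hx : x ∈ C) (n : ℕ),
      cf n x hx * (1 - e n / 2) ≤ L x ∧ L x ≤ cf n x hx * (1 + e n) := by
    intro x hx n
    constructor
    · apply ge_of_tendsto (hL x hx)
      filter_upwards [eventually_ge_atTop n] with m hm
      obtain ⟨d, rfl⟩ := Nat.exists_eq_add_of_le hm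
      exact (hbound x hx n d).1
    · apply le_of_tendsto (hL x hx)
      filter_upwards [eventually_ge_atTop n] with m hm
      obtain ⟨d, rfl⟩ := Nat.exists_eq_add_of_le hm
      exact (hbound x hx n d).2
  have hLpos : ∀ (x : ℝ) (hx : x ∈ C), 0 < L x := by
    intro x hx
    have h := (hLbound x hx 0).1
    have hc0 := hcpos 0 x hx
    have he0 : e 0 = 1 := pow_zero _
    rw [he0] at h
    nlinarith
  -- the maxima converge to the length functions
  have hMXten : ∀ (x : ℝ) (hx : x ∈ C),
      Tendsto (fun n => fX n (idx n x hx)) atTop (𝓝 (lX x)) := by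
    intro x hx
    exact aux_tendsto_sSup C lX hlX0 hendX hnendX x hx
      (fun n => Icc (u n (idx n x hx)) (v n (idx n x hx)))
      (fun n => hidx n x hx) (hnbhd 0 x hx) (hshr x hx)
      (fun n => (aux_pos_facts (hMpos n x hx).1).2)
  have hMYten : ∀ (x : ℝ) (hx : x ∈ C),
      Tendsto (fun n => fY n (idx n x hx)) atTop (𝓝 (lY x)) := by
    intro x hx
    exact aux_tendsto_sSup C lY hlY0 hendY hnendY x hx
      (fun n => Icc (u n (idx n x hx)) (v n (idx n x hx)))
      (fun n => hidx n x hx) (hnbhd 0 x hx) (hshr x hx)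
      (fun n => (aux_pos_facts (hMpos n x hx).2).2)
  -- the key identity lY = L * lX on C
  have hkey : ∀ (x : ℝ) (hx : x ∈ C), lY x = L x * lX x := by
    intro x hx
    rcases eq_or_lt_of_le (hlX0 x hx) with h0 | hpos
    · have hten : Tendsto (fun n => 2 * cf 0 x hx * fX n (idx n x hx)) atTop (𝓝 0) := by
        have h := (hMXten x hx).const_mul (2 * cf 0 x hx)
        rw [← h0, mul_zero] at h
        exact h
      have hle2 : ∀ n, lY x ≤ 2 * cf 0 x hx * fX n (idx n x hx) := by
        intro n
        have hy : lY x ≤ fY n (idx n x hx) :=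
          le_csSup (aux_pos_facts (hMpos n x hx).2).2 ⟨x, ⟨hidx n x hx, hx⟩, rfl⟩
        have hcle : cf n x hx ≤ 2 * cf 0 x hx := by
          have h := (hbound x hx 0 n).2
          rw [Nat.zero_add] at h
          have he0 : e 0 = 1 := pow_zero _
          rw [he0] at h; linarith
        have hYrw : fY n (idx n x hx) = cf n x hx * fX n (idx n x hx) :=
          (div_mul_cancel₀ _ (ne_of_gt (hMpos n x hx).1)).symm
        rw [hYrw] at hy
        calc lY x ≤ cf n x hx * fX n (idx n x hx) := hy
          _ ≤ 2 * cf 0 x hx * fX n (idx n x hx) :=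
            mul_le_mul_of_nonneg_right hcle (hfXnn n _)
      have hley : lY x ≤ 0 := ge_of_tendsto hten (Eventually.of_forall hle2)
      rw [← h0, mul_zero]
      linarith [hlY0 x hx]
    · have hten : Tendsto (fun n => cf n x hx) atTop (𝓝 (lY x / lX x)) :=
        (hMYten x hx).div (hMXten x hx) (ne_of_gt hpos)
      have hLeq := tendsto_nhds_unique (hL x hx) hten
      rw [hLeq, div_mul_cancel₀ _ (ne_of_gt hpos)]
  -- a uniform bound on cf 0
  set B : ℝ := ∑ i : Fin (k 0), max (fY 0 i / fX 0 i) 0 with hBdef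
  have hBnn : (0:ℝ) ≤ B := Finset.sum_nonneg fun i _ => le_max_right _ _
  have hc0le : ∀ (x : ℝ) (hx : x ∈ C), cf 0 x hx ≤ B := by
    intro x hx
    calc cf 0 x hx ≤ max (fY 0 (idx 0 x hx) / fX 0 (idx 0 x hx)) 0 := le_max_left _ _
      _ ≤ B := Finset.single_le_sum (f := fun i : Fin (k 0) => max (fY 0 i / fX 0 i) 0)
          (fun i _ => le_max_right _ _) (Finset.mem_univ (idx 0 x hx))
  -- continuity of L on C
  have hLcont : ContinuousOn L C := by
    rw [Metric.continuousOn_iff]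
    intro x hx ε hε
    obtain ⟨n, hn⟩ : ∃ n : ℕ, (4*B+1) * e n < ε := by
      obtain ⟨n, hn⟩ : ∃ n : ℕ, (2⁻¹:ℝ)^n < ε / (4*B+1) :=
        exists_pow_lt_of_lt_one (by positivity) (by norm_num)
      refine ⟨n, ?_⟩
      have h4 : (0:ℝ) < 4*B+1 := by linarith
      calc (4*B+1) * e n < (4*B+1) * (ε / (4*B+1)) := by
            exact mul_lt_mul_of_pos_left hn h4
        _ = ε := by field_simp
    obtain ⟨U, hUo, hxU, hUsub⟩ := hnbhd n x hx
    obtain ⟨δ, hδ, hball⟩ := Metric.isOpen_iff.1 hUo x hxU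
    refine ⟨δ, hδ, fun y hy hdist => ?_⟩
    have hyU : y ∈ U := hball hdist
    have hidxeq : idx n x hx = idx n y hy := huniq n y hy (idx n x hx) (hUsub ⟨hyU, hy⟩)
    have hcfeq : cf n y hy = cf n x hx := by
      show fY n (idx n y hy) / fX n (idx n y hy) = fY n (idx n x hx) / fX n (idx n x hx)
      rw [hidxeq]
    have hcle : ∀ (z : ℝ) (hz : z ∈ C), cf n z hz ≤ 2*B := by
      intro z hz
      have h := (hbound z hz 0 n).2
      rw [Nat.zero_add] at h
      have he0 : e 0 = 1 := pow_zero _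
      rw [he0] at h
      have := hc0le z hz
      have := hcpos 0 z hz
      nlinarith
    have habs : ∀ (z : ℝ) (hz : z ∈ C), cf n z hz = cf n x hx →
        |L z - cf n x hx| ≤ 2*B * e n := by
      intro z hz hzeq
      obtain ⟨hb1, hb2⟩ := hLbound z hz n
      rw [hzeq] at hb1 hb2
      have hcn := hcpos n x hx
      have hcnB : cf n x hx ≤ 2*B := hzeq ▸ hcle z hz
      have hen := hepos n
      rw [abs_le]
      constructor <;> nlinarith
    have h1 := habs y hy hcfeq
    have h2 := habs x hx rfl
    rw [Real.dist_eq]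
    calc |L y - L x| ≤ |L y - cf n x hx| + |cf n x hx - L x| := abs_sub_le _ _ _
      _ = |L y - cf n x hx| + |L x - cf n x hx| := by rw [abs_sub_comm (cf n x hx) (L x)]
      _ ≤ 2*B * e n + 2*B * e n := add_le_add h1 h2
      _ < ε := by
          have hen := hepos n
          nlinarith
  -- extend L to a positive continuous function on ℝ
  have hCclosed : IsClosed C := hCcomp.isClosed
  have hlogcont : ContinuousOn (fun t => Real.log (L t)) C := by
    apply ContinuousOn.log hLcont
    intro t ht; exact ne_of_gt (hLpos t ht)
  obtain ⟨G, hG⟩ := ContinuousMap.exists_restrict_eq hCclosed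
    ⟨_, continuousOn_iff_continuous_restrict.1 hlogcont⟩
  have hGeq : ∀ (t : ℝ) (ht : t ∈ C), G t = Real.log (L t) := by
    intro t ht
    exact congrFun (congrArg ContinuousMap.toFun hG) ⟨t, ht⟩
  set g : ℝ → ℝ := fun t => Real.exp (G t) with hg
  have hgcont : Continuous g := Real.continuous_exp.comp G.continuous
  have hgpos : ∀ t, 0 < g t := fun t => Real.exp_pos _
  have hgL : ∀ t, t ∈ C → g t = L t := by
    intro t ht
    show Real.exp (G t) = L t
    rw [hGeq t ht, Real.exp_log (hLpos t ht)]
  -- the ambient homeomorphism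
  refine ⟨{
      toFun := fun p => (p.1, g p.1 * p.2)
      invFun := fun p => (p.1, (g p.1)⁻¹ * p.2)
      left_inv := by
        rintro ⟨a, b⟩
        simp only
        rw [← mul_assoc, inv_mul_cancel₀ (ne_of_gt (hgpos a)), one_mul]
      right_inv := by
        rintro ⟨a, b⟩
        simp only
        rw [← mul_assoc, mul_inv_cancel₀ (ne_of_gt (hgpos a)), one_mul]
      continuous_toFun :=
        continuous_fst.prodMk ((hgcont.comp continuous_fst).mul continuous_snd)
      continuous_invFun :=
        continuous_fst.prodMk (((hgcont.comp continuous_fst).inv₀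
          (fun p => ne_of_gt (hgpos p.1))).mul continuous_snd)
    }, ?_⟩
  rw [hXeq, hYeq]
  ext ⟨a, b⟩
  simp only [Set.mem_image, Set.mem_setOf_eq, Homeomorph.homeomorph_mk_coe, Equiv.coe_fn_mk]
  constructor
  · rintro ⟨⟨p1, p2⟩, ⟨hp1, hp2, hp3⟩, heq⟩
    simp only [Prod.mk.injEq] at heq
    obtain ⟨rfl, rfl⟩ := heq
    refine ⟨hp1, mul_nonneg (hgpos p1).le hp2, ?_⟩
    calc g p1 * p2 ≤ g p1 * lX p1 := mul_le_mul_of_nonneg_left hp3 (hgpos p1).le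
      _ = L p1 * lX p1 := by rw [hgL p1 hp1]
      _ = lY p1 := (hkey p1 hp1).symm
  · rintro ⟨ha, hb0, hble⟩
    refine ⟨(a, (g a)⁻¹ * b), ⟨ha, mul_nonneg (inv_nonneg.2 (hgpos a).le) hb0, ?_⟩, ?_⟩
    · rw [inv_mul_le_iff₀ (hgpos a)]
      calc b ≤ lY a := hble
        _ = L a * lX a := hkey a ha
        _ = g a * lX a := by rw [hgL a ha]
    · show (a, g a * ((g a)⁻¹ * b)) = (a, b)
      rw [← mul_assoc, mul_inv_cancel₀ (ne_of_gt (hgpos a)), one_mul]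
end

section
/- Let X = {(x, y) ∈ ℝ² : x ∈ C, 0 ≤ y ≤ l(x)} be a straight hairy Cantor set, where C ⊆ ℝ is a Cantor set and l : C → [0, ∞) is the length function of X. Then: (i) the set {l(x) : x ∈ C} is dense in the interval [0, sup_{x∈C} l(x)]; (ii) the set {(x, l(x)) : x ∈ C} is dense in X. -/
open Set Filter Topology Metric

section Aux
variable {C : Set ℝ} {l : ℝ → ℝ}

private lemma left_pts {x : ℝ} (h : ¬ IsEndpointOf C x) :
    ∀ δ > (0:ℝ), ∃ t, t ∈ C ∧ x - δ < t ∧ t < x := by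
  intro δ hδ
  unfold IsEndpointOf at h
  push_neg at h
  have h2 := (h δ hδ).2
  rcases h2 with ⟨t, ht⟩
  exact ⟨t, ht.2, ht.1.1, ht.1.2⟩

private lemma exists_gap (htd : IsTotallyDisconnected C) {u u' : ℝ}
    (hu : u ∈ C) (hu' : u' ∈ C) (huu : u < u') :
    ∃ w, u < w ∧ w < u' ∧ w ∉ C := by
  by_contra hcon
  push_neg at hcon
  have hsub : Icc u u' ⊆ C := by
    intro t ht
    rcases eq_or_lt_of_le ht.1 with h1 | h1
    · rwa [← h1]
    rcases eq_or_lt_of_le ht.2 with h2 | h2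
    · rwa [h2]
    · exact hcon t h1 h2
  have hss := htd (Icc u u') hsub isPreconnected_Icc
  exact huu.ne (hss (left_mem_Icc.2 huu.le) (right_mem_Icc.2 huu.le))

/-- a point not in `C` in any left interval of a non-endpoint -/
private lemma left_gap_pt {x : ℝ} (htd : IsTotallyDisconnected C)
    (h : ¬ IsEndpointOf C x) : ∀ δ > (0:ℝ), ∃ p, p ∉ C ∧ x - δ < p ∧ p < x := by
  intro δ hδ
  obtain ⟨u, huC, hu1, hu2⟩ := left_pts h δ hδ
  obtain ⟨u', hu'C, hu'1, hu'2⟩ := left_pts h (x - u) (by linarith)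
  have huu' : u < u' := by linarith
  obtain ⟨w, hw1, hw2, hwC⟩ := exists_gap htd huC hu'C huu'
  exact ⟨w, hwC, by linarith, by linarith⟩

private lemma left_neBot {x : ℝ} (h : ¬ IsEndpointOf C x) :
    (𝓝[C ∩ Iio x] x).NeBot := by
  rw [← mem_closure_iff_nhdsWithin_neBot, Metric.mem_closure_iff]
  intro ε hε
  obtain ⟨t, htC, h1, h2⟩ := left_pts h ε hε
  exact ⟨t, ⟨htC, h2⟩, by rw [Real.dist_eq, abs_of_pos (by linarith)]; linarith⟩

private lemma freq_of_limsup {F : Filter ℝ} [hF : F.NeBot] {L a : ℝ}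
    (h0 : ∀ᶠ t in F, 0 ≤ l t) (hls : Filter.limsup l F = L)
    (ha : a < L) : ∃ᶠ t in F, a < l t := by
  by_contra hcon
  rw [Filter.not_frequently] at hcon
  have hev : ∀ᶠ t in F, l t ≤ a := hcon.mono fun t ht => not_lt.mp ht
  have hbdd : BddBelow {b | ∀ᶠ t in F, l t ≤ b} := by
    refine ⟨0, fun b hb => ?_⟩
    obtain ⟨t, h1, h2⟩ := (hb.and h0).exists
    linarith
  have hle : Filter.limsup l F ≤ a := by
    rw [Filter.limsup_eq]; exact csInf_le hbdd hev
  rw [hls] at hle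
  linarith

private lemma blowup_of {F : Filter ℝ} {m c : ℝ}
    (hfreq : ∃ᶠ t in F, m ≤ l t) (hls : Filter.limsup l F = c) (hc : c < m) :
    ∀ a : ℝ, ∃ᶠ t in F, a < l t := by
  intro a
  rcases eq_empty_or_nonempty {b | ∀ᶠ t in F, l t ≤ b} with hT | hT
  · have ha : a ∉ {b | ∀ᶠ t in F, l t ≤ b} := by rw [hT]; exact notMem_empty a
    rw [mem_setOf_eq, Filter.not_eventually] at ha
    exact ha.mono fun t ht => not_le.mp ht
  · exfalso
    have hm : m ≤ sInf {b | ∀ᶠ t in F, l t ≤ b} := by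
      refine le_csInf hT fun b hb => ?_
      obtain ⟨t, h1, h2⟩ := (hfreq.and_eventually hb).exists
      linarith
    rw [← Filter.limsup_eq, hls] at hm
    linarith

/-- a point near which `l` blows up at all scales has zero length -/
private lemma D0 {z : ℝ}
    (h_end : ∀ x ∈ C, IsEndpointOf C x →
      l x = 0 ∧ Filter.limsup l (𝓝[C \ {x}] x) = 0)
    (h_mid : ∀ x ∈ C, ¬ IsEndpointOf C x →
      Filter.limsup l (𝓝[C ∩ Iio x] x) = l x ∧ Filter.limsup l (𝓝[C ∩ Ioi x] x) = l x)
    (hz : z ∈ C)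
    (hD : ∀ a : ℝ, ∀ η > (0:ℝ), ∃ t, t ∈ C ∧ |t - z| < η ∧ a < l t) :
    l z = 0 := by
  by_cases hep : IsEndpointOf C z
  · exact (h_end z hz hep).1
  have hside : (∀ a : ℝ, ∀ η > (0:ℝ), ∃ t, t ∈ C ∧ z < t ∧ t < z + η ∧ a < l t) ∨
      (∀ a : ℝ, ∀ η > (0:ℝ), ∃ t, t ∈ C ∧ z - η < t ∧ t < z ∧ a < l t) := by
    by_contra hcon
    push_neg at hcon
    obtain ⟨⟨aR, ηR, hηR, hR⟩, ⟨aL, ηL, hηL, hL⟩⟩ := hcon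
    obtain ⟨t, htC, hd, hlt⟩ := hD (max aR (max aL (l z))) (min ηR ηL) (lt_min hηR hηL)
    have hd' := abs_lt.mp hd
    rcases lt_trichotomy t z with hlt' | hlt' | hlt'
    · have : l t ≤ aL := hL t htC (by have := lt_of_le_of_lt (neg_le_neg (min_le_right ηR ηL)) hd'.1; linarith) hlt'
      have h2 : aL ≤ max aR (max aL (l z)) := le_max_of_le_right (le_max_left _ _)
      linarith
    · rw [hlt'] at hlt
      have h2 : l z ≤ max aR (max aL (l z)) := le_max_of_le_right (le_max_right _ _)
      linarith
    · have : l t ≤ aR := hR t htC hlt' (by have := lt_of_lt_of_le hd'.2 (min_le_left ηR ηL); linarith)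
      have h2 : aR ≤ max aR (max aL (l z)) := le_max_left _ _
      linarith
  rcases hside with hU | hU
  · have hmid := (h_mid z hz hep).2
    have hT : {b | ∀ᶠ t in 𝓝[C ∩ Ioi z] z, l t ≤ b} = ∅ := by
      rw [eq_empty_iff_forall_notMem]
      intro b hb
      rw [mem_setOf_eq, eventually_nhdsWithin_iff, Metric.eventually_nhds_iff] at hb
      obtain ⟨η, hη, hb⟩ := hb
      obtain ⟨t, htC, h1, h2, h3⟩ := hU b η hη
      have : l t ≤ b := hb
        (show dist t z < η by rw [Real.dist_eq, abs_of_pos (by linarith)]; linarith)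
        ⟨htC, h1⟩
      linarith
    rw [Filter.limsup_eq, hT, Real.sInf_empty] at hmid
    exact hmid.symm
  · have hmid := (h_mid z hz hep).1
    have hT : {b | ∀ᶠ t in 𝓝[C ∩ Iio z] z, l t ≤ b} = ∅ := by
      rw [eq_empty_iff_forall_notMem]
      intro b hb
      rw [mem_setOf_eq, eventually_nhdsWithin_iff, Metric.eventually_nhds_iff] at hb
      obtain ⟨η, hη, hb⟩ := hb
      obtain ⟨t, htC, h1, h2, h3⟩ := hU b η hη
      have : l t ≤ b := hb
        (show dist t z < η by rw [Real.dist_eq, abs_of_neg (by linarith)]; linarith)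
        ⟨htC, h2⟩
      linarith
    rw [Filter.limsup_eq, hT, Real.sInf_empty] at hmid
    exact hmid.symm

end Aux

section LemA
variable {C : Set ℝ} {l : ℝ → ℝ}

private lemma lemA
    (hcomp : IsCompact C) (htd : IsTotallyDisconnected C)
    (h0 : ∀ x ∈ C, 0 ≤ l x)
    (h_end : ∀ x ∈ C, IsEndpointOf C x →
      l x = 0 ∧ Filter.limsup l (𝓝[C \ {x}] x) = 0)
    (h_mid : ∀ x ∈ C, ¬ IsEndpointOf C x →
      Filter.limsup l (𝓝[C ∩ Iio x] x) = l x ∧ Filter.limsup l (𝓝[C ∩ Ioi x] x) = l x)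
    {x v ε δ : ℝ} (hx : x ∈ C) (hv0 : 0 ≤ v) (hvl : v ≤ l x)
    (hε : 0 < ε) (hδ : 0 < δ) :
    ∃ t, t ∈ C ∧ |t - x| < δ ∧ |l t - v| < ε := by
  by_contra hcon
  push_neg at hcon
  -- hcon : ∀ t, t ∈ C → |t - x| < δ → ε ≤ |l t - v|
  have habs : ∀ t, t ∈ C → |t - x| < δ → v < l t → v + ε ≤ l t := by
    intro t htC htx htv
    have := hcon t htC htx
    rw [abs_of_pos (by linarith)] at this
    linarith
  have hlx : v + ε ≤ l x := by
    have := hcon x hx (by simpa using hδ)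
    rw [abs_of_nonneg (by linarith)] at this
    linarith
  have hxne : ¬ IsEndpointOf C x := by
    intro hep
    have := (h_end x hx hep).1
    linarith
  -- find s close to x on the left with l s ≥ v + ε
  haveI := left_neBot (C := C) hxne
  have h0x : ∀ᶠ t in 𝓝[C ∩ Iio x] x, 0 ≤ l t :=
    eventually_mem_nhdsWithin.mono fun t ht => h0 t ht.1
  have hfx : ∃ᶠ t in 𝓝[C ∩ Iio x] x, v < l t :=
    freq_of_limsup h0x (h_mid x hx hxne).1 (by linarith)
  have hevx : ∀ᶠ t in 𝓝[C ∩ Iio x] x, (x - δ < t) ∧ t ∈ C ∩ Iio x :=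
    ((eventually_gt_nhds (by linarith : x - δ < x)).filter_mono nhdsWithin_le_nhds).and
      eventually_mem_nhdsWithin
  obtain ⟨s, hsv, hsδ, hsC, hsx⟩ := (hfx.and_eventually hevx).exists
  rw [mem_Iio] at hsx
  have hsδ' : |s - x| < δ := by rw [abs_of_neg (by linarith)]; linarith
  have hls : v + ε ≤ l s := habs s hsC hsδ' hsv
  have hsne : ¬ IsEndpointOf C s := by
    intro hep; have := (h_end s hsC hep).1; linarith
  -- s is not a blow-up point
  have hsD : ¬ (∀ a : ℝ, ∀ η > (0:ℝ), ∃ t, t ∈ C ∧ |t - s| < η ∧ a < l t) := by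
    intro hDs
    have := D0 h_end h_mid hsC hDs
    linarith
  push_neg at hsD
  obtain ⟨a₀, η₀, hη₀, hbound⟩ := hsD
  -- choose the window
  set ρ : ℝ := min (η₀ / 2) (s - (x - δ)) with hρdef
  have hρ : 0 < ρ := lt_min (by linarith) (by linarith)
  obtain ⟨p, hpC, hp1, hp2⟩ := left_gap_pt htd hsne ρ hρ
  have hpxδ : x - δ < p := by
    have : s - ρ ≥ x - δ := by
      have := min_le_right (η₀ / 2) (s - (x - δ)); rw [← hρdef] at this; linarith
    linarith
  -- the set S and its infimum
  set S : Set ℝ := {t | t ∈ C ∧ p ≤ t ∧ t ≤ s ∧ v + ε ≤ l t} with hSdef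
  have hsS : s ∈ S := ⟨hsC, hp2.le, le_refl s, hls⟩
  have hSne : S.Nonempty := ⟨s, hsS⟩
  have hSbdd : BddBelow S := ⟨p, fun t ht => ht.2.1⟩
  set x₀ : ℝ := sInf S with hx₀def
  have hx₀p : p ≤ x₀ := le_csInf hSne fun t ht => ht.2.1
  have hx₀s : x₀ ≤ s := csInf_le hSbdd hsS
  have hx₀C : x₀ ∈ C := by
    have hcl : x₀ ∈ closure S := csInf_mem_closure hSne hSbdd
    exact closure_minimal (fun t ht => ht.1) hcomp.isClosed hcl
  have hpx₀ : p < x₀ := lt_of_le_of_ne hx₀p (fun hh => hpC (hh ▸ hx₀C))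
  have hx₀δ : |x₀ - x| < δ := by
    rw [abs_of_nonpos (by linarith)]; linarith
  -- |x₀ - s| is small
  have hx₀sρ : |x₀ - s| < η₀ / 2 := by
    have h1 : s - p < ρ := by linarith
    have h2 : ρ ≤ η₀ / 2 := min_le_left _ _
    rw [abs_of_nonpos (by linarith)]
    linarith
  by_cases hx₀S : x₀ ∈ S
  · -- x₀ ∈ S : descend further to the left, contradiction with inf
    have hlx₀ : v + ε ≤ l x₀ := hx₀S.2.2.2
    have hx₀ne : ¬ IsEndpointOf C x₀ := by
      intro hep; have := (h_end x₀ hx₀C hep).1; linarith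
    haveI := left_neBot (C := C) hx₀ne
    have h00 : ∀ᶠ t in 𝓝[C ∩ Iio x₀] x₀, 0 ≤ l t :=
      eventually_mem_nhdsWithin.mono fun t ht => h0 t ht.1
    have hf : ∃ᶠ t in 𝓝[C ∩ Iio x₀] x₀, v < l t :=
      freq_of_limsup h00 (h_mid x₀ hx₀C hx₀ne).1 (by linarith)
    have hev : ∀ᶠ t in 𝓝[C ∩ Iio x₀] x₀, (p < t) ∧ t ∈ C ∩ Iio x₀ :=
      ((eventually_gt_nhds hpx₀).filter_mono nhdsWithin_le_nhds).and
        eventually_mem_nhdsWithin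
    obtain ⟨t, htv, htp, htC, htx₀⟩ := (hf.and_eventually hev).exists
    rw [mem_Iio] at htx₀
    have htδ : |t - x| < δ := by
      rw [abs_of_nonpos (by linarith)]; linarith
    have htS : t ∈ S := ⟨htC, htp.le, by linarith, habs t htC htδ htv⟩
    have := csInf_le hSbdd htS
    rw [← hx₀def] at this
    linarith
  · -- x₀ ∉ S : S accumulates from the right, blow-up contradiction
    have hlx₀small : l x₀ ≤ v - ε := by
      have hne : ¬ (v + ε ≤ l x₀) := by
        intro hh; exact hx₀S ⟨hx₀C, hx₀p, hx₀s, hh⟩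
      push_neg at hne
      have h2 := hcon x₀ hx₀C hx₀δ
      rcases le_or_gt (l x₀) v with hc | hc
      · rw [abs_of_nonpos (by linarith)] at h2; linarith
      · rw [abs_of_pos (by linarith)] at h2; linarith
    have hSacc : ∀ η > (0:ℝ), ∃ t, t ∈ S ∧ x₀ < t ∧ t < x₀ + η := by
      intro η hη
      by_contra hc
      push_neg at hc
      have : x₀ + η ≤ sInf S := by
        refine le_csInf hSne fun t ht => ?_
        have h1 : x₀ ≤ t := csInf_le hSbdd ht
        have h2 : x₀ ≠ t := fun hh => hx₀S (hh ▸ ht)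
        exact hc t ht (lt_of_le_of_ne h1 h2)
      rw [← hx₀def] at this
      linarith
    -- build the blow-up property of x₀ and contradict hbound
    have hDx₀ : ∀ a : ℝ, ∀ η > (0:ℝ), ∃ t, t ∈ C ∧ |t - x₀| < η ∧ a < l t := by
      by_cases hx₀ep : IsEndpointOf C x₀
      · obtain ⟨-, hlim⟩ := h_end x₀ hx₀C hx₀ep
        have hfreq : ∃ᶠ t in 𝓝[C \ {x₀}] x₀, v + ε ≤ l t := by
          rw [Filter.frequently_iff]
          intro U hU
          rw [Metric.mem_nhdsWithin_iff] at hU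
          obtain ⟨η, hη, hUsub⟩ := hU
          obtain ⟨t, htS, h1, h2⟩ := hSacc η hη
          refine ⟨t, hUsub ⟨?_, htS.1, fun hh => (by simp at hh; exact h1.ne' hh)⟩, htS.2.2.2⟩
          rw [mem_ball, Real.dist_eq, abs_of_pos (by linarith)]; linarith
        have hblow := blowup_of hfreq hlim (by linarith)
        intro a η hη
        have hev : ∀ᶠ t in 𝓝[C \ {x₀}] x₀, t ∈ C \ {x₀} ∧ dist t x₀ < η :=
          eventually_mem_nhdsWithin.and
            ((Metric.eventually_nhds_iff.mpr ⟨η, hη, fun y hy => hy⟩).filter_mono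
              nhdsWithin_le_nhds)
        obtain ⟨t, hta, htm, htd'⟩ := ((hblow a).and_eventually hev).exists
        exact ⟨t, htm.1, by rwa [Real.dist_eq] at htd', hta⟩
      · obtain ⟨-, hlim⟩ := h_mid x₀ hx₀C hx₀ep
        have hfreq : ∃ᶠ t in 𝓝[C ∩ Ioi x₀] x₀, v + ε ≤ l t := by
          rw [Filter.frequently_iff]
          intro U hU
          rw [Metric.mem_nhdsWithin_iff] at hU
          obtain ⟨η, hη, hUsub⟩ := hU
          obtain ⟨t, htS, h1, h2⟩ := hSacc η hη
          refine ⟨t, hUsub ⟨?_, htS.1, h1⟩, htS.2.2.2⟩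
          rw [mem_ball, Real.dist_eq, abs_of_pos (by linarith)]; linarith
        have hblow := blowup_of hfreq hlim (by linarith)
        intro a η hη
        have hev : ∀ᶠ t in 𝓝[C ∩ Ioi x₀] x₀, t ∈ C ∩ Ioi x₀ ∧ dist t x₀ < η :=
          eventually_mem_nhdsWithin.and
            ((Metric.eventually_nhds_iff.mpr ⟨η, hη, fun y hy => hy⟩).filter_mono
              nhdsWithin_le_nhds)
        obtain ⟨t, hta, htm, htd'⟩ := ((hblow a).and_eventually hev).exists
        exact ⟨t, htm.1, by rwa [Real.dist_eq] at htd', hta⟩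
    obtain ⟨t, htC, htd', hta⟩ := hDx₀ a₀ (η₀ / 2) (by linarith)
    have : |t - s| < η₀ := by
      have := abs_sub_le t x₀ s
      calc |t - s| ≤ |t - x₀| + |x₀ - s| := abs_sub_le t x₀ s
        _ < η₀ / 2 + η₀ / 2 := by linarith
        _ = η₀ := by ring
    have := hbound t htC this
    linarith

end LemA

/-- Theorem: for a straight hairy Cantor set with base `C` and length function `l`, the
set of lengths is dense in `[0, sup l]`, and the set of tips `(x, l x)` is dense in `X`. -/
theorem lengths_dense_and_tips_dense
    (C : Set ℝ) (l : ℝ → ℝ) (X : Set (ℝ × ℝ))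
    (h : IsStraightHairyCantorSetWith C l X) :
    Icc (0:ℝ) (sSup (l '' C)) ⊆ closure (l '' C) ∧
    X ⊆ closure {p : ℝ × ℝ | ∃ x ∈ C, p = (x, l x)} := by
  obtain ⟨⟨hne, hcomp, hperf, htd⟩, h0, hX, -, h_end, h_mid⟩ := h
  constructor
  · intro y hy
    rw [Metric.mem_closure_iff]
    intro ε hε
    -- find x ∈ C with y - ε < l x
    have hxe : ∃ x ∈ C, y - ε < l x := by
      rcases eq_or_lt_of_le hy.1 with h1 | h1
      · obtain ⟨x, hx⟩ := hne
        exact ⟨x, hx, by have := h0 x hx; linarith⟩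
      · have himne : (l '' C).Nonempty := hne.image l
        obtain ⟨b, hb, hyb⟩ := exists_lt_of_lt_csSup himne
          (by linarith [hy.2] : y - ε < sSup (l '' C))
        obtain ⟨x, hx, rfl⟩ := hb
        exact ⟨x, hx, hyb⟩
    obtain ⟨x, hx, hyx⟩ := hxe
    by_cases hcl : |l x - y| < ε
    · exact ⟨l x, mem_image_of_mem l hx, by rwa [Real.dist_eq, abs_sub_comm]⟩
    · push_neg at hcl
      have hylx : y ≤ l x := by
        rcases le_or_gt (l x) y with hc | hc
        · rw [abs_of_nonpos (by linarith)] at hcl; linarith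
        · linarith
      obtain ⟨t, htC, -, htv⟩ :=
        lemA hcomp htd h0 h_end h_mid hx hy.1 hylx hε one_pos
      exact ⟨l t, mem_image_of_mem l htC, by rw [Real.dist_eq, abs_sub_comm]; exact htv⟩
  · intro q hq
    rw [hX, mem_setOf_eq] at hq
    obtain ⟨hq1, hq2, hq3⟩ := hq
    rw [Metric.mem_closure_iff]
    intro ε hε
    obtain ⟨t, htC, htx, htv⟩ :=
      lemA hcomp htd h0 h_end h_mid hq1 hq2 hq3 (half_pos hε) (half_pos hε)
    refine ⟨(t, l t), ⟨t, htC, rfl⟩, ?_⟩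
    rw [Prod.dist_eq]
    have h1 : dist q.1 t < ε := by
      rw [Real.dist_eq, abs_sub_comm]; linarith
    have h2 : dist q.2 (l t) < ε := by
      rw [Real.dist_eq, abs_sub_comm]; linarith
    exact max_lt h1 h2
end
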